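/- arXiv:1202.2582 — 10 statements merged into one kernel-verified Lean document; each statement's English description precedes it below -/
import Mathlib

section
/- Let δ > 0 and let r, k be positive integers. If A ⊆ ℕ is a set of upper density at least δ, then for every r-edge-coloring of the complete graph on A there exist natural numbers a ≥ 1 and d₁, …, d_k ≥ 1 such that the Hilbert cube H(a; d₁, …, d_k) is contained in A, its 2^k elements are distinct, and it is a monochromatic clique under the coloring. -/
/-!
Upper density `δ` yields, for every `N`, a Hilbert cube `a + ∑_{i ∈ I} wᵢ` in `A` of dimension
`N` with pairwise distinct subset sums: repeatedly pass from a set `B` of density `≥ 1/M` in an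
interval to the set `{x ∈ B | x + e ∈ B}` for a popular difference `e`, with the differences
growing super-increasingly. The colouring of `A` then becomes a symmetric colouring `κ` of pairs
of subsets of `Fin N`, and it suffices to find a monochromatic *signed cube*: a base set and `k`
disjoint pairs of blocks, a point taking one block from each pair. Such a cube gives a Hilbert
cube in `A` by choosing in each pair the heavier block as the "present" one, with differences
`|w(B⁺ⱼ) - w(B⁻ⱼ)| ≥ 1`.

The signed cube is found in three steps. Hales–Jewett over the alphabet `Bool × Bool`, a word
encoding a pair of sets, gives by induction a signed cube on which the colour of a pair depends
only on the first coordinate where the two points differ and on their common prefix. Hales–Jewett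
over `Bool`, again by induction, merges coordinates so that it depends on that coordinate only.
Pigeonhole keeps `k` coordinates of one colour.
-/

open Finset

namespace AdditiveRamsey

section Superincreasing

variable {ι : Type*} [LinearOrder ι] [LocallyFiniteOrderBot ι] {d : ι → ℕ}

theorem sum_lt_sum_of_toColex_lt (hd : ∀ i, ∑ j ∈ Iio i, d j < d i) {s t : Finset ι}
    (hst : toColex s < toColex t) : ∑ i ∈ s, d i < ∑ i ∈ t, d i := by
  obtain ⟨a, hat, has, hmax⟩ := Colex.toColex_lt_toColex_iff_exists_forall_lt.1 hst
  calc ∑ i ∈ s, d i = ∑ i ∈ s ∩ t, d i + ∑ i ∈ s \ t, d i := (sum_inter_add_sum_sdiff s t d).symm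
    _ ≤ ∑ i ∈ s ∩ t, d i + ∑ i ∈ Iio a, d i := by
        gcongr
        intro b hb
        rw [mem_sdiff] at hb
        exact mem_Iio.2 (hmax b hb.1 hb.2)
    _ < ∑ i ∈ t ∩ s, d i + d a := by rw [inter_comm]; gcongr; exact hd a
    _ ≤ ∑ i ∈ t ∩ s, d i + ∑ i ∈ t \ s, d i := by
        gcongr
        exact single_le_sum (fun _ _ => Nat.zero_le _) (mem_sdiff.2 ⟨hat, has⟩)
    _ = ∑ i ∈ t, d i := sum_inter_add_sum_sdiff t s d

theorem injective_sum_of_superincreasing (hd : ∀ i, ∑ j ∈ Iio i, d j < d i) :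
    Function.Injective fun s : Finset ι => ∑ i ∈ s, d i :=
  (StrictMono.injective (f := fun s : Colex (Finset ι) => ∑ i ∈ ofColex s, d i)
    fun _ _ h => sum_lt_sum_of_toColex_lt hd h).comp fun _ _ => toColex_inj.1

end Superincreasing

theorem one_le_of_injective_sum {ι : Type*} {a : ℕ} {d : ι → ℕ}
    (h : Function.Injective fun s : Finset ι => a + ∑ i ∈ s, d i) (i : ι) : 1 ≤ d i := by
  by_contra hi
  exact singleton_ne_empty i (h (by simp [show d i = 0 by omega]))

section PopularDifference

theorem sum_card_le_card_biUnion_add_sum_card_inter {α : Type*} [DecidableEq α]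
    (B : ℕ → Finset α) (m : ℕ) :
    ∑ i ∈ range m, #(B i) ≤
      #((range m).biUnion B) + ∑ j ∈ range m, ∑ i ∈ range j, #(B i ∩ B j) := by
  induction m with
  | zero => simp
  | succ m ih =>
    have hinter : #((range m).biUnion B ∩ B m) ≤ ∑ i ∈ range m, #(B i ∩ B m) := by
      rw [biUnion_inter]
      exact card_biUnion_le
    have hunion := card_union_add_card_inter ((range m).biUnion B) (B m)
    rw [sum_range_succ, sum_range_succ, range_add_one, biUnion_insert, union_comm]
    omega

theorem card_map_add_inter_map_add_le (B : Finset ℕ) {i j : ℕ} (hij : i ≤ j) :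
    #(B.map (addRightEmbedding i) ∩ B.map (addRightEmbedding j)) ≤
      #{x ∈ B | x + (j - i) ∈ B} := by
  calc _ ≤ #({x ∈ B | x + (j - i) ∈ B}.map (addRightEmbedding j)) := by
        refine card_le_card fun y hy => ?_
        simp only [mem_inter, mem_map, addRightEmbedding_apply, mem_filter] at hy ⊢
        obtain ⟨⟨u, hu, rfl⟩, v, hv, hvu⟩ := hy
        exact ⟨v, ⟨hv, by rwa [show v + (j - i) = u by omega]⟩, hvu⟩
    _ = _ := card_map _

/-- The `2M` translates `B + i (L + 1)` have total size `≥ 2n` but lie in an interval of length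
about `n`, so by the Bonferroni inequality some two of them overlap in `≥ n / 4M²` points. -/
theorem exists_popular_difference {n M L : ℕ} (hM : 0 < M) {B : Finset ℕ} (hB : B ⊆ range n)
    (hdense : n ≤ M * #B) (hn : 4 * M * (L + 1) ≤ n) :
    ∃ d, L < d ∧ d ≤ 2 * M * (L + 1) ∧ n ≤ 4 * M ^ 2 * #{x ∈ B | x + d ∈ B} := by
  set h := L + 1
  set translate : ℕ → Finset ℕ := fun i => B.map (addRightEmbedding (i * h))
  set t : (Σ _ : ℕ, ℕ) → ℕ := fun p => #(translate p.2 ∩ translate p.1)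
  set pairs := (range (2 * M)).sigma range
  have hunion : #((range (2 * M)).biUnion translate) ≤ n + 2 * M * h := by
    calc _ ≤ #(range (n + 2 * M * h)) := card_le_card fun y hy => ?_
      _ = _ := card_range _
    simp only [translate, mem_biUnion, mem_range, mem_map, addRightEmbedding_apply] at hy ⊢
    obtain ⟨i, hi, x, hx, rfl⟩ := hy
    have := mem_range.1 (hB hx)
    nlinarith
  have hpairs : n ≤ 2 * ∑ p ∈ pairs, t p := by
    have := sum_card_le_card_biUnion_add_sum_card_inter translate (2 * M)
    simp only [translate, card_map, sum_const, card_range, smul_eq_mul] at this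
    rw [sum_sigma]
    nlinarith
  have hcard : #pairs * 2 ≤ 4 * M ^ 2 := by
    rw [card_sigma]
    simp only [card_range, sum_range_id_mul_two]
    calc 2 * M * (2 * M - 1) ≤ 2 * M * (2 * M) := Nat.mul_le_mul_left _ (Nat.sub_le _ _)
      _ = 4 * M ^ 2 := by ring
  obtain ⟨⟨j, i⟩, hp, hle⟩ : ∃ p ∈ pairs, n ≤ 4 * M ^ 2 * t p := by
    refine exists_le_of_sum_le ⟨⟨1, 0⟩, by simp [pairs]; omega⟩ ?_
    rw [sum_const, smul_eq_mul, ← mul_sum]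
    nlinarith
  simp only [pairs, mem_sigma, mem_range] at hp
  refine ⟨(j - i) * h, ?_, ?_, ?_⟩
  · exact Nat.lt_of_lt_of_le (Nat.lt_succ_self L)
      (Nat.le_mul_of_pos_left h (Nat.sub_pos_of_lt hp.2))
  · nlinarith [Nat.sub_le j i]
  · refine hle.trans (Nat.mul_le_mul_left _ ?_)
    have := card_map_add_inter_map_add_le B (Nat.mul_le_mul_right h hp.2.le)
    rwa [← Nat.sub_mul] at this

end PopularDifference

section CubesInDenseSets

theorem sum_cons_eq_ite_add {j : ℕ} (x : ℕ) (d : Fin j → ℕ) (I : Finset (Fin (j + 1))) :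
    ∑ i ∈ I, (Fin.cons x d : Fin (j + 1) → ℕ) i =
      (if 0 ∈ I then x else 0) + ∑ i ∈ univ.filter (fun i => i.succ ∈ I), d i := by
  rw [sum_filter, ← univ_inter I, ← sum_ite_mem, Fin.sum_univ_succ]
  simp

/-- The first difference `e` is popular in `B`; the others form a cube in `{x ∈ B | x + e ∈ B}`
with a slack `L` larger than any such `e`. -/
theorem exists_superincreasing_cube (j : ℕ) {M : ℕ} (hM : 0 < M) (L : ℕ) :
    ∃ N₀, ∀ n ≥ N₀, ∀ B : Finset ℕ, B ⊆ range n → n ≤ M * #B →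
      ∃ (a : ℕ) (d : Fin j → ℕ), (∀ I : Finset (Fin j), a + ∑ i ∈ I, d i ∈ B) ∧
        ∀ i, L + ∑ i' ∈ Iio i, d i' < d i := by
  induction j generalizing M L with
  | zero =>
    refine ⟨1, fun n hn B _ hdense => ?_⟩
    obtain ⟨a, ha⟩ : B.Nonempty := card_pos.1 (by nlinarith)
    exact ⟨a, Fin.elim0, fun I => by simpa [Subsingleton.elim I ∅], fun i => i.elim0⟩
  | succ j ih =>
    obtain ⟨N₀, hN₀⟩ := ih (M := 4 * M ^ 2) (by positivity) (L + 2 * M * (L + 1))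
    refine ⟨max N₀ (4 * M * (L + 1)), fun n hn B hB hdense => ?_⟩
    obtain ⟨e, hLe, heM, hpop⟩ :=
      exists_popular_difference hM hB hdense (le_of_max_le_right hn)
    obtain ⟨a, d, hcube, hgrowth⟩ :=
      hN₀ n (le_of_max_le_left hn) _ ((filter_subset _ _).trans hB) hpop
    refine ⟨a, Fin.cons e d, fun I => ?_, Fin.cases ?_ fun i => ?_⟩
    · have := mem_filter.1 (hcube (univ.filter fun i => i.succ ∈ I))
      rw [sum_cons_eq_ite_add]
      split_ifs
      · rw [add_comm e, ← add_assoc]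
        exact this.2
      · simpa using this.1
    · rw [Fin.cons_zero, Iio_eq_empty.2 fun b _ => Fin.zero_le b, sum_empty, add_zero]
      exact hLe
    · have hIio : univ.filter (fun i' : Fin j => i'.succ ∈ Iio i.succ) = Iio i := by
        ext; simp [Fin.succ_lt_succ_iff]
      rw [sum_cons_eq_ite_add, hIio, if_pos (mem_Iio.2 i.succ_pos), Fin.cons_succ]
      have := hgrowth i
      omega

open Filter in
theorem exists_dense_finset_of_le_limsup {A : Set ℕ} {δ : ℝ} (hδ : 0 < δ)
    (hA : δ ≤ limsup (fun n : ℕ => (Nat.card ↥(A ∩ Set.Icc 1 n) : ℝ) / n) atTop) (N₀ : ℕ) :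
    ∃ n ≥ N₀, ∃ B : Finset ℕ, B ⊆ Icc 1 n ∧ ↑B ⊆ A ∧ n + 1 ≤ ⌈4 / δ⌉₊ * #B := by
  have hcobounded : IsCoboundedUnder (· ≤ ·) atTop
      fun n : ℕ => (Nat.card ↥(A ∩ Set.Icc 1 n) : ℝ) / n :=
    isCoboundedUnder_le_of_le atTop fun n => by positivity
  obtain ⟨n, hdense, hn⟩ := ((frequently_lt_of_lt_limsup hcobounded
    (half_lt_self hδ |>.trans_le hA)).and_eventually (eventually_ge_atTop (N₀ + 1))).exists
  have hfin : (A ∩ Set.Icc 1 n).Finite := (Set.finite_Icc 1 n).inter_of_right A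
  refine ⟨n, by omega, hfin.toFinset, fun x hx => ?_, fun x hx => ?_, ?_⟩
  · simpa using (hfin.mem_toFinset.1 hx).2
  · exact (hfin.mem_toFinset.1 hx).1
  rw [Nat.card_coe_set_eq, Set.ncard_eq_toFinset_card _ hfin] at hdense
  have hn1 : (1 : ℝ) ≤ n := by exact_mod_cast (show 1 ≤ n by omega)
  rw [lt_div_iff₀ (by positivity)] at hdense
  have hceil : 4 / δ * #hfin.toFinset ≤ ⌈4 / δ⌉₊ * #hfin.toFinset :=
    mul_le_mul_of_nonneg_right (Nat.le_ceil _) (Nat.cast_nonneg _)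
  have : (n : ℝ) + 1 ≤ 4 / δ * #hfin.toFinset := by
    rw [div_mul_eq_mul_div, le_div_iff₀ hδ]
    nlinarith
  exact_mod_cast this.trans hceil

open Filter in
theorem exists_injective_cube_of_le_limsup {A : Set ℕ} {δ : ℝ} (hδ : 0 < δ)
    (hA : δ ≤ limsup (fun n : ℕ => (Nat.card ↥(A ∩ Set.Icc 1 n) : ℝ) / n) atTop) (N : ℕ) :
    ∃ (a : ℕ) (d : Fin N → ℕ), 1 ≤ a ∧ (∀ I : Finset (Fin N), a + ∑ i ∈ I, d i ∈ A) ∧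
      Function.Injective fun I : Finset (Fin N) => a + ∑ i ∈ I, d i := by
  obtain ⟨N₀, hN₀⟩ := exists_superincreasing_cube N (Nat.ceil_pos.2 (by positivity : 0 < 4 / δ)) 0
  obtain ⟨n, hn, B, hBn, hBA, hdense⟩ := exists_dense_finset_of_le_limsup hδ hA N₀
  obtain ⟨a, d, hcube, hgrowth⟩ := hN₀ (n + 1) (by omega) B
    (fun x hx => mem_range.2 (Nat.lt_succ_of_le (mem_Icc.1 (hBn hx)).2)) hdense
  refine ⟨a, d, by simpa using (mem_Icc.1 (hBn (hcube ∅))).1, fun I => hBA (hcube I),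
    (add_right_injective a).comp (injective_sum_of_superincreasing fun i => ?_)⟩
  simpa using hgrowth i

end CubesInDenseSets

/-- `.inl b` is the constant `b` and `.inr (j, s)` the condition `ε j = s` on `ε : Fin S → Bool`. -/
abbrev Lit (S : ℕ) := Bool ⊕ (Fin S × Bool)

namespace Lit

variable {S T : ℕ}

def eval (ε : Fin S → Bool) : Lit S → Bool :=
  Sum.elim id fun p => ε p.1 == p.2

/-- Replaces the variable `j` by the literal `σ j` (negated in a literal `(j, false)`). -/
def subst (σ : Fin T → Lit S) : Lit T → Lit S :=
  Sum.elim .inl fun p => (σ p.1).map (· == p.2) fun q => (q.1, q.2 == p.2)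

def VarLT (t : Fin S) : Lit S → Prop :=
  Sum.elim (fun _ => True) fun p => p.1 < t

@[simp] theorem eval_inl (ε : Fin S → Bool) (b : Bool) : eval ε (.inl b) = b := rfl

@[simp] theorem eval_inr (ε : Fin S → Bool) (j : Fin S) (s : Bool) :
    eval ε (.inr (j, s)) = (ε j == s) := rfl

theorem eval_subst (σ : Fin T → Lit S) (δ : Fin S → Bool) (ℓ : Lit T) :
    eval δ (subst σ ℓ) = eval (fun j => eval δ (σ j)) ℓ := by
  rcases ℓ with b | ⟨j, s⟩
  · rfl
  · rcases hσ : σ j with b | ⟨t, s'⟩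
    · simp [subst, hσ]
    · cases δ t <;> cases s <;> cases s' <;> simp [subst, hσ]

theorem eval_congr_of_varLT {t : Fin S} {ℓ : Lit S} (hℓ : ℓ.VarLT t) {δ δ' : Fin S → Bool}
    (hδ : ∀ i < t, δ i = δ' i) : eval δ ℓ = eval δ' ℓ := by
  rcases ℓ with b | ⟨j, s⟩
  · rfl
  · simp [hδ j hℓ]

def shift : Lit S → Lit (S + 1) := subst fun j => .inr (j.succ, true)

@[simp] theorem eval_shift (δ : Fin (S + 1) → Bool) (ℓ : Lit S) :
    eval δ ℓ.shift = eval (Fin.tail δ) ℓ := by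
  rw [shift, eval_subst]
  simp only [eval_inr, beq_true]
  rfl

theorem VarLT.shift {ℓ : Lit S} {t : Fin S} (h : ℓ.VarLT t) : ℓ.shift.VarLT t.succ := by
  rcases ℓ with b | ⟨j, s⟩
  · trivial
  · exact Fin.succ_lt_succ_iff.2 h

/-- Points `δ, δ'` first differing at `t` are then sent by `σ` to points first differing at
`lead t`. -/
structure IsTriangular (σ : Fin T → Lit S) (lead : Fin S → Fin T) : Prop where
  apply_lead : ∀ t, σ (lead t) = .inr (t, true)
  varLT_of_lt : ∀ t j, j < lead t → (σ j).VarLT t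

end Lit

def DependsOnPrefix {γ : Type*} {T : ℕ} (θ : Fin T → (Fin T → Bool) → γ) : Prop :=
  ∀ m ε ε', (∀ i < m, ε i = ε' i) → θ m ε = θ m ε'

theorem exists_first_ne {S : ℕ} {ε ε' : Fin S → Bool} (h : ε ≠ ε') :
    ∃ m, (∀ i < m, ε i = ε' i) ∧ ε m ≠ ε' m := by
  obtain ⟨m, hm, hmin⟩ := wellFounded_lt.has_min {i | ε i ≠ ε' i} (Function.ne_iff.1 h)
  exact ⟨m, fun i hi => by_contra fun hne => hmin i hne hi, hm⟩

/-- `x` lies in the base if `lit x = .inl true` and in the block `(j, s)` if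
`lit x = .inr (j, s)`; the point `ε` is the base together with the blocks `(j, ε j)`. -/
structure SignedCube (ι : Type*) (S : ℕ) where
  lit : ι → Lit S
  exists_lit_eq : ∀ j, ∃ x s, lit x = .inr (j, s)

namespace SignedCube

variable {ι γ : Type*} [Fintype ι] {k S T : ℕ}

def point (C : SignedCube ι S) (ε : Fin S → Bool) : Finset ι := {x | (C.lit x).eval ε}

theorem point_injective (C : SignedCube ι S) : Function.Injective C.point := by
  intro ε ε' h
  funext j
  obtain ⟨x, s, hx⟩ := C.exists_lit_eq j
  have := congrArg (x ∈ ·) h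
  simp only [point, mem_filter, mem_univ, true_and, hx, Lit.eval_inr, eq_iff_iff] at this
  cases hε : ε j <;> cases hε' : ε' j <;> cases s <;> simp_all

def subst (C : SignedCube ι T) (σ : Fin T → Lit S) (lead : Fin S → Fin T)
    (hσ : Lit.IsTriangular σ lead) : SignedCube ι S where
  lit x := (C.lit x).subst σ
  exists_lit_eq t := by
    obtain ⟨x, s, hx⟩ := C.exists_lit_eq (lead t)
    exact ⟨x, s, by simp [hx, Lit.subst, hσ.apply_lead]⟩

theorem point_subst (C : SignedCube ι T) {σ : Fin T → Lit S} {lead : Fin S → Fin T}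
    (hσ : Lit.IsTriangular σ lead) (δ : Fin S → Bool) :
    (C.subst σ lead hσ).point δ = C.point fun j => (σ j).eval δ := by
  ext x
  simp [point, subst, Lit.eval_subst]

def weight (C : SignedCube ι S) (w : ι → ℕ) (ℓ : Lit S) : ℕ := ∑ x ∈ {x | C.lit x = ℓ}, w x

theorem sum_point_eq (C : SignedCube ι S) (w : ι → ℕ) (ε : Fin S → Bool) :
    ∑ x ∈ C.point ε, w x = C.weight w (.inl true) + ∑ j, C.weight w (.inr (j, ε j)) := by
  have hfiber : ∀ ℓ, ∑ x ∈ {x | C.lit x = ℓ}, (if (C.lit x).eval ε then w x else 0) =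
      if ℓ.eval ε then C.weight w ℓ else 0 := fun ℓ => by
    rw [weight]
    split_ifs with h
    · exact sum_congr rfl fun x hx => by rw [(mem_filter.1 hx).2, if_pos h]
    · exact sum_eq_zero fun x hx => by rw [(mem_filter.1 hx).2, if_neg h]
  rw [point, sum_filter, ← sum_fiberwise univ C.lit]
  simp only [hfiber, Fintype.sum_sum_type, Fintype.sum_prod_type]
  simp

/-- The point `ε I` takes the heavier block of the pair `t` exactly when `t ∈ I`. -/
theorem exists_hilbertCube_eq_sum_point (C : SignedCube ι k) (w : ι → ℕ) :
    ∃ (a : ℕ) (d : Fin k → ℕ) (ε : Finset (Fin k) → Fin k → Bool), Function.Injective ε ∧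
      ∀ I, a + ∑ i ∈ I, d i = ∑ x ∈ C.point (ε I), w x := by
  set P := fun t => C.weight w (.inr (t, true))
  set M := fun t => C.weight w (.inr (t, false))
  refine ⟨C.weight w (.inl true) + ∑ t, min (P t) (M t),
    fun t => max (P t) (M t) - min (P t) (M t),
    fun I t => xor (decide (t ∈ I)) (decide (P t < M t)), fun I J h => ?_, fun I => ?_⟩
  · ext t
    simpa using congrFun h t
  · rw [sum_point_eq, add_assoc, ← univ_inter I, ← sum_ite_mem, ← sum_add_distrib]
    refine congrArg _ (sum_congr rfl fun t _ => ?_)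
    have hP : C.weight w (.inr (t, true)) = P t := rfl
    have hM : C.weight w (.inr (t, false)) = M t := rfl
    by_cases hI : t ∈ I <;> by_cases hPM : P t < M t <;> simp [hI, hPM, hP, hM] <;> omega

def IsCanonical (κ : Finset ι → Finset ι → γ) (C : SignedCube ι S)
    (c : Fin S → (Fin S → Bool) → γ) : Prop :=
  ∀ ε ε' m, (∀ i < m, ε i = ε' i) → ε m ≠ ε' m → κ (C.point ε) (C.point ε') = c m ε

variable {κ : Finset ι → Finset ι → γ}

theorem IsCanonical.subst {C : SignedCube ι T} {c : Fin T → (Fin T → Bool) → γ}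
    (hC : C.IsCanonical κ c) {σ : Fin T → Lit S} {lead : Fin S → Fin T}
    (hσ : Lit.IsTriangular σ lead) :
    (C.subst σ lead hσ).IsCanonical κ fun t δ => c (lead t) fun j => (σ j).eval δ := by
  intro δ δ' t hbelow hne
  rw [point_subst, point_subst]
  refine hC _ _ _ (fun j hj => Lit.eval_congr_of_varLT (hσ.varLT_of_lt t j hj) hbelow) ?_
  simpa [hσ.apply_lead] using hne

/-- Two points agreeing below `m` are compared through a third one differing from both first
at `m`. -/
theorem IsCanonical.dependsOnPrefix (hκ : ∀ X Y, κ X Y = κ Y X) {C : SignedCube ι T}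
    {c : Fin T → (Fin T → Bool) → γ} (hC : C.IsCanonical κ c) : DependsOnPrefix c := by
  have hswap : ∀ m ε ε', (∀ i < m, ε i = ε' i) → ε m ≠ ε' m → c m ε = c m ε' :=
    fun m ε ε' hbelow hne => by
      rw [← hC ε ε' m hbelow hne, hκ, hC ε' ε m (fun i hi => (hbelow i hi).symm) hne.symm]
  intro m ε ε' hbelow
  by_cases hm : ε m = ε' m
  · set ε₁ := Function.update ε' m (!ε' m)
    have hε₁ : ∀ i < m, ε₁ i = ε' i := fun i hi => Function.update_of_ne hi.ne _ _
    have hε₁m : ε₁ m = !ε' m := Function.update_self _ _ _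
    rw [hswap m ε ε₁ (fun i hi => (hbelow i hi).trans (hε₁ i hi).symm) (by simp [hε₁m, hm]),
      hswap m ε₁ ε' hε₁ (by simp [hε₁m])]
  · exact hswap m ε ε' hbelow hm

theorem IsCanonical.eq_of_ne {C : SignedCube ι S} {c : Fin S → (Fin S → Bool) → γ}
    (hC : C.IsCanonical κ c) {c₀ : γ} (hc : ∀ m ε, c m ε = c₀) {δ δ' : Fin S → Bool}
    (h : δ ≠ δ') : κ (C.point δ) (C.point δ') = c₀ :=
  let ⟨m, hbelow, hne⟩ := exists_first_ne h
  (hC δ δ' m hbelow hne).trans (hc m δ)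

end SignedCube

section CanonicalCubes

open Combinatorics

variable {N n S : ℕ} (l : Subspace (Option (Fin N)) (Bool × Bool) (Fin n))

/-- A word `u : Fin n → Bool × Bool` encodes the pair of sets `{i | (u i).1}`, `{i | (u i).2}`.
Through `l`, the word `pairWord P Q` encodes `(liftSet l true P, liftSet l false Q)`. -/
def pairWord (P Q : Finset (Fin N)) : Option (Fin N) → Bool × Bool :=
  fun o => o.elim (true, false) fun g => (decide (g ∈ P), decide (g ∈ Q))

def liftSet (b : Bool) (X : Finset (Fin N)) : Finset (Fin n) :=
  {i | ((l.idxFun i).elim (fun p => cond b p.1 p.2) fun o => o.elim b fun g => decide (g ∈ X) :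
    Bool)}

theorem fst_pairWord (P Q : Finset (Fin N)) :
    ({i | (l (pairWord P Q) i).1} : Finset (Fin n)) = liftSet l true P := by
  ext i
  simp only [liftSet, mem_filter, mem_univ, true_and]
  rw [Subspace.apply_def]
  rcases l.idxFun i with p | _ | g <;> simp [pairWord]

theorem snd_pairWord (P Q : Finset (Fin N)) :
    ({i | (l (pairWord P Q) i).2} : Finset (Fin n)) = liftSet l false Q := by
  ext i
  simp only [liftSet, mem_filter, mem_univ, true_and]
  rw [Subspace.apply_def]
  rcases l.idxFun i with p | _ | g <;> simp [pairWord]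

def SignedCube.lift (C : SignedCube (Fin N) S) : SignedCube (Fin n) (S + 1) where
  lit i := match l.idxFun i with
    | .inl (p, q) => if p = q then .inl p else .inr (0, p)
    | .inr none => .inr (0, true)
    | .inr (some g) => (C.lit g).shift
  exists_lit_eq := Fin.cases (by
      obtain ⟨i, hi⟩ := l.proper none
      exact ⟨i, true, by simp [hi]⟩) fun j => by
    obtain ⟨g, s, hg⟩ := C.exists_lit_eq j
    obtain ⟨i, hi⟩ := l.proper (some g)
    exact ⟨i, s, by simp [hi, hg, Lit.shift, Lit.subst]⟩

theorem SignedCube.point_lift (C : SignedCube (Fin N) S) (ε : Fin (S + 1) → Bool) :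
    (C.lift l).point ε = liftSet l (ε 0) (C.point (Fin.tail ε)) := by
  ext i
  simp only [point, liftSet, mem_filter, mem_univ, true_and]
  dsimp only [lift]
  rcases l.idxFun i with ⟨p, q⟩ | _ | g
  · cases p <;> cases q <;> cases h : ε 0 <;> simp [h]
  · cases h : ε 0 <;> simp [h]
  · simp

/-- Pairs of points first differing at `0` are encoded by words of `l`, which have colour `c₀`;
the other pairs lie in one of the halves `ε 0 = true`, `ε 0 = false`, coloured through the two
components of the colouring of the inner cube `C`. -/
theorem SignedCube.isCanonical_lift {γ : Type*} {κ : Finset (Fin n) → Finset (Fin n) → γ}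
    (hκ : ∀ X Y, κ X Y = κ Y X) {c₀ : γ} (hl : ∀ x, κ {i | (l x i).1} {i | (l x i).2} = c₀)
    {C : SignedCube (Fin N) S} {c : Fin S → (Fin S → Bool) → γ × γ}
    (hC : C.IsCanonical (fun X Y => (κ (liftSet l true X) (liftSet l true Y),
      κ (liftSet l false X) (liftSet l false Y))) c) :
    (C.lift l).IsCanonical κ (Fin.cases (fun _ => c₀) fun m ε =>
      if ε 0 then (c m (Fin.tail ε)).1 else (c m (Fin.tail ε)).2) := by
  intro ε ε' m hbelow hne
  simp only [point_lift]
  induction m using Fin.cases with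
  | zero =>
    have hsplit : ∀ P Q, κ (liftSet l true P) (liftSet l false Q) = c₀ := fun P Q => by
      rw [← fst_pairWord l P Q, ← snd_pairWord l P Q]
      exact hl _
    obtain ⟨hε, hε'⟩ | ⟨hε, hε'⟩ : ε 0 = true ∧ ε' 0 = false ∨ ε 0 = false ∧ ε' 0 = true := by
      revert hne
      cases ε 0 <;> cases ε' 0 <;> simp
    · rw [hε, hε']
      exact hsplit _ _
    · rw [hε, hε', hκ]
      exact hsplit _ _
  | succ m =>
    have h0 : ε 0 = ε' 0 := hbelow 0 m.succ_pos
    have := hC (Fin.tail ε) (Fin.tail ε') m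
      (fun i hi => hbelow i.succ (Fin.succ_lt_succ_iff.2 hi)) hne
    rw [← h0]
    cases hb : ε 0
    · simpa [hb] using congrArg Prod.snd this
    · simpa [hb] using congrArg Prod.fst this

theorem exists_isCanonical (S : ℕ) (γ : Type*) [Finite γ] :
    ∃ n, ∀ κ : Finset (Fin n) → Finset (Fin n) → γ, (∀ X Y, κ X Y = κ Y X) →
      ∃ (C : SignedCube (Fin n) S) (c : Fin S → (Fin S → Bool) → γ), C.IsCanonical κ c := by
  induction S generalizing γ with
  | zero =>
    exact ⟨0, fun κ _ => ⟨⟨fun i => i.elim0, fun j => j.elim0⟩, fun m => m.elim0,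
      fun _ _ m => m.elim0⟩⟩
  | succ S ih =>
    obtain ⟨N, hN⟩ := ih (γ × γ)
    obtain ⟨n, hn⟩ :=
      Subspace.exists_mono_in_high_dimension_fin (Bool × Bool) γ (Option (Fin N))
    refine ⟨n, fun κ hκ => ?_⟩
    obtain ⟨l, c₀, hl⟩ := hn fun u => κ {i | (u i).1} {i | (u i).2}
    obtain ⟨C, c, hC⟩ := hN (fun X Y => (κ (liftSet l true X) (liftSet l true Y),
      κ (liftSet l false X) (liftSet l false Y))) fun X Y => by
        rw [hκ, hκ (liftSet l false X)]
    exact ⟨C.lift l, _, SignedCube.isCanonical_lift l hκ hl hC⟩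

end CanonicalCubes

section TriangularSubstitution

open Combinatorics

variable {γ : Type*} {n S T : ℕ}

theorem DependsOnPrefix.append {θ : Fin (n + T) → (Fin (n + T) → Bool) → γ}
    (hθ : DependsOnPrefix θ) (v : Fin n → Bool) :
    DependsOnPrefix fun m p => θ (Fin.natAdd n m) (Fin.append v p) := by
  intro m p p' hp
  refine hθ _ _ _ fun i hi => ?_
  induction i using Fin.addCases with
  | left i => simp
  | right i => simpa using hp i (by simpa using hi)

theorem exists_first_idxFun_eq_inr {η α : Type*} (l : Subspace η α (Fin n)) (e : η) :
    ∃ i₀, l.idxFun i₀ = .inr e ∧ ∀ i < i₀, l.idxFun i ≠ .inr e := by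
  obtain ⟨i₀, hi₀, hmin⟩ := wellFounded_lt.has_min {i | l.idxFun i = .inr e} (l.proper e)
  exact ⟨i₀, hi₀, fun i hi h => hmin i h hi⟩

def Lit.ofLine (l : Subspace Unit Bool (Fin n)) (i : Fin n) : Lit (S + 1) :=
  (l.idxFun i).map id fun _ => (0, true)

theorem Lit.eval_ofLine (l : Subspace Unit Bool (Fin n)) (δ : Fin (S + 1) → Bool)
    (i : Fin n) : (ofLine l i).eval δ = l (fun _ => δ 0) i := by
  rcases h : l.idxFun i with b | _ <;> simp [ofLine, h, Subspace.apply_def]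

theorem Lit.IsTriangular.append {l : Subspace Unit Bool (Fin n)} {i₀ : Fin n}
    (hi₀ : l.idxFun i₀ = .inr ()) (hfirst : ∀ i < i₀, l.idxFun i ≠ .inr ())
    {σ : Fin T → Lit S} {lead : Fin S → Fin T} (hσ : IsTriangular σ lead) :
    IsTriangular (Fin.append (ofLine l) fun j => (σ j).shift)
      (Fin.cons (Fin.castAdd T i₀) fun t => Fin.natAdd n (lead t)) := by
  constructor
  · refine Fin.cases ?_ fun t => ?_
    · simp [ofLine, hi₀]
    · simp [hσ.apply_lead, shift, subst]
  intro t j hj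
  induction t using Fin.cases with
  | zero =>
    induction j using Fin.addCases with
    | left j =>
      have hj' : Fin.castAdd T j < Fin.castAdd T i₀ := hj
      rcases h : l.idxFun j with b | _
      · simp [ofLine, h, VarLT]
      · exact absurd h (hfirst j (Fin.lt_def.2 (by simpa using Fin.lt_def.1 hj')))
    | right j => exact absurd hj (by simp [Fin.lt_def]; omega)
  | succ t =>
    induction j using Fin.addCases with
    | left j => rcases h : l.idxFun j with b | _ <;> simp [ofLine, h, VarLT, Fin.succ_pos]
    | right j => simpa using (hσ.varLT_of_lt t j (by simpa using hj)).shift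

/-- The first `n` coordinates carry a monochromatic line `l` for the colouring
`v ↦ θ (n + ·) (v ++ ·)`; its moving coordinates become the variable `0`, led by the first of
them, and the remaining `T` coordinates come from the induction hypothesis applied to the colour
of `l`. -/
theorem exists_isTriangular (γ : Type*) [Finite γ] (S : ℕ) :
    ∃ T, ∀ θ : Fin T → (Fin T → Bool) → γ, DependsOnPrefix θ →
      ∃ (σ : Fin T → Lit S) (lead : Fin S → Fin T) (η : Fin S → γ), Lit.IsTriangular σ lead ∧
        ∀ δ t, θ (lead t) (fun j => (σ j).eval δ) = η t := by
  induction S with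
  | zero =>
    exact ⟨0, fun _ _ => ⟨Fin.elim0, Fin.elim0, Fin.elim0,
      ⟨fun t => t.elim0, fun t => t.elim0⟩, fun _ t => t.elim0⟩⟩
  | succ S ih =>
    obtain ⟨T, hT⟩ := ih
    obtain ⟨n, hn⟩ :=
      Subspace.exists_mono_in_high_dimension_fin Bool (Fin T → (Fin T → Bool) → γ) Unit
    refine ⟨n + T, fun θ hθ => ?_⟩
    obtain ⟨l, c₀, hl⟩ := hn fun v m p => θ (Fin.natAdd n m) (Fin.append v p)
    obtain ⟨σ, lead, η, hσ, hη⟩ := hT c₀ (by rw [← hl fun _ => true]; exact hθ.append _)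
    obtain ⟨i₀, hi₀, hfirst⟩ := exists_first_idxFun_eq_inr l ()
    set σ' : Fin (n + T) → Lit (S + 1) := Fin.append (Lit.ofLine l) fun j => (σ j).shift
    have heval : ∀ δ, (fun j => (σ' j).eval δ) =
        Fin.append (l fun _ => δ 0) fun j => (σ j).eval (Fin.tail δ) := fun δ => by
      funext j
      induction j using Fin.addCases <;> simp [σ', Lit.eval_ofLine]
    have hσ' := hσ.append hi₀ hfirst
    refine ⟨σ', _, Fin.cons (θ (Fin.castAdd T i₀) fun j => (σ' j).eval fun _ => true) η, hσ',
      fun δ t => ?_⟩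
    induction t using Fin.cases with
    | zero =>
      exact hθ _ _ _ fun j hj => Lit.eval_congr_of_varLT (hσ'.varLT_of_lt 0 j hj)
        fun i hi => absurd hi (Fin.not_lt_zero i)
    | succ t =>
      simp only [heval, Fin.cons_succ]
      rw [← hη (Fin.tail δ) t, ← hl fun _ => δ 0]

theorem exists_isTriangular_const [Fintype γ] [DecidableEq γ] {k : ℕ}
    (η : Fin S → γ) (hS : Fintype.card γ * (k - 1) < S) :
    ∃ (σ : Fin S → Lit k) (lead : Fin k → Fin S) (c : γ),
      Lit.IsTriangular σ lead ∧ ∀ t, η (lead t) = c := by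
  obtain ⟨c, hc⟩ := Fintype.exists_lt_card_fiber_of_mul_lt_card η (by rwa [Fintype.card_fin])
  set e := ({j | η j = c} : Finset (Fin S)).orderEmbOfCardLe (k := k) (by omega)
  refine ⟨fun j => (Function.partialInv e j).elim (.inl true) fun t => .inr (t, true), e, c,
    ⟨fun t => by simp [Function.partialInv_left e.injective], fun t j hj => ?_⟩,
    fun t => by simpa using orderEmbOfCardLe_mem ({j | η j = c} : Finset (Fin S)) _ t⟩
  rcases h : Function.partialInv e j with _ | t'
  · simp [Lit.VarLT]
  · have : e t' = j := (e.injective.isPartialInv _ _).1 h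
    simpa [h, Lit.VarLT, ← this] using hj

end TriangularSubstitution

theorem exists_monochromatic_signedCube (k : ℕ) (γ : Type*) [Fintype γ] [DecidableEq γ] :
    ∃ N, ∀ κ : Finset (Fin N) → Finset (Fin N) → γ, (∀ X Y, κ X Y = κ Y X) →
      ∃ (C : SignedCube (Fin N) k) (c : γ),
        ∀ δ δ', δ ≠ δ' → κ (C.point δ) (C.point δ') = c := by
  obtain ⟨T, hT⟩ := exists_isTriangular γ (Fintype.card γ * (k - 1) + 1)
  obtain ⟨N, hN⟩ := exists_isCanonical T γ
  refine ⟨N, fun κ hκ => ?_⟩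
  obtain ⟨C, c, hC⟩ := hN κ hκ
  obtain ⟨σ, lead, η, hσ, hη⟩ := hT c (hC.dependsOnPrefix hκ)
  obtain ⟨σ₂, lead₂, c₀, hσ₂, hc₀⟩ := exists_isTriangular_const η (Nat.lt_succ_self _)
  exact ⟨(C.subst σ lead hσ).subst σ₂ lead₂ hσ₂, c₀, fun δ δ' h =>
    ((hC.subst hσ).subst hσ₂).eq_of_ne (fun t δ => by simp [hη, hc₀]) h⟩

end AdditiveRamsey

theorem additive_ramsey_upper_density_general (δ : ℝ) (hδ : 0 < δ) (r k : ℕ) (A : Set ℕ)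
    (hA : δ ≤ Filter.limsup
      (fun n : ℕ => (Nat.card ↥(A ∩ Set.Icc 1 n) : ℝ) / n) Filter.atTop) :
    ∀ χ : Sym2 ℕ → Fin r,
      ∃ (a : ℕ) (d : Fin k → ℕ),
        1 ≤ a ∧ (∀ i, 1 ≤ d i) ∧
        (∀ I : Finset (Fin k), a + ∑ i ∈ I, d i ∈ A) ∧
        Function.Injective (fun I : Finset (Fin k) => a + ∑ i ∈ I, d i) ∧
        ∃ c : Fin r, ∀ I J : Finset (Fin k), I ≠ J →
          χ s(a + ∑ i ∈ I, d i, a + ∑ i ∈ J, d i) = c := by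
  intro χ
  obtain ⟨N, hN⟩ := AdditiveRamsey.exists_monochromatic_signedCube k (Fin r)
  obtain ⟨a₀, w, ha₀, hcubeA, hinj⟩ := AdditiveRamsey.exists_injective_cube_of_le_limsup hδ hA N
  obtain ⟨C, c, hC⟩ :=
    hN (fun X Y => χ s(a₀ + ∑ x ∈ X, w x, a₀ + ∑ x ∈ Y, w x)) fun _ _ => congrArg χ Sym2.eq_swap
  obtain ⟨a, d, ε, hε, hval⟩ := C.exists_hilbertCube_eq_sum_point w
  have hcube : ∀ I, a₀ + a + ∑ i ∈ I, d i = a₀ + ∑ x ∈ C.point (ε I), w x := fun I => by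
    rw [add_assoc, hval]
  have hinj' : Function.Injective fun I : Finset (Fin k) => a₀ + a + ∑ i ∈ I, d i := by
    simp only [hcube]
    exact hinj.comp (C.point_injective.comp hε)
  refine ⟨a₀ + a, d, by omega, AdditiveRamsey.one_le_of_injective_sum hinj',
    fun I => hcube I ▸ hcubeA _, hinj', c, fun I J hIJ => ?_⟩
  rw [hcube, hcube]
  exact hC _ _ (hε.ne hIJ)

/-- If `A ⊆ ℕ` has upper density at least `δ > 0`, then every `r`-edge-coloring of the complete
graph on `A` admits a Hilbert cube `H(a; d₁, …, d_k) ⊆ A` (with `a, dᵢ ≥ 1`) whose `2^k`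
elements are distinct and form a monochromatic clique. -/
theorem additive_ramsey_upper_density (δ : ℝ) (hδ : 0 < δ) (r k : ℕ) (hr : 0 < r)
    (hk : 0 < k) (A : Set ℕ)
    (hA : δ ≤ Filter.limsup
      (fun n : ℕ => (Nat.card ↥(A ∩ Set.Icc 1 n) : ℝ) / n) Filter.atTop) :
    ∀ χ : Sym2 ℕ → Fin r,
      ∃ (a : ℕ) (d : Fin k → ℕ),
        1 ≤ a ∧ (∀ i, 1 ≤ d i) ∧
        (∀ I : Finset (Fin k), a + ∑ i ∈ I, d i ∈ A) ∧
        Function.Injective (fun I : Finset (Fin k) => a + ∑ i ∈ I, d i) ∧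
        ∃ c : Fin r, ∀ I J : Finset (Fin k), I ≠ J →
          χ s(a + ∑ i ∈ I, d i, a + ∑ i ∈ J, d i) = c :=
  additive_ramsey_upper_density_general δ hδ r k A hA
end

section
/- For every k ≥ 1, c ≥ 1, and n ≥ 1, there is a number E = E(k,c,n) such that for every c-coloring χ of the perfect k-ary tree of height E there is an embedding φ of the perfect k-ary tree of height n into the perfect k-ary tree of height E whose image is monochromatic under χ (all nodes in the image of φ receive the same color). -/
/-!
Induction on the number of colours. Fix a colour `γ` and grow an embedded tree avoiding `γ`
level by level. With `m` frontier nodes, look at `m * n + 1` consecutive levels: either at one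
of them every frontier node has a descendant not coloured `γ`, and these become the next level,
or, by pigeonhole, some frontier node has `n + 1` levels on which all its descendants are
coloured `γ`, and those levels carry a `γ`-monochromatic copy of the tree of height `n`.
Once the `γ`-free tree is as tall as the induction hypothesis requires, it is coloured with one
colour fewer, and embeddings compose.
-/

open Finset

universe u

namespace TreeEmbedding

variable {α : Type u}

def IsEmb (n : ℕ) (φ : List α → List α) (x : ℕ → ℕ) : Prop :=
  StrictMonoOn x (Set.Iic n) ∧
  (∀ t : List α, t.length ≤ n → (φ t).length = x t.length) ∧
  (∀ s t : List α, s.length ≤ n → t.length ≤ n → ∀ i : α, t ++ [i] <+: s → φ t ++ [i] <+: φ s)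

theorem IsEmb.comp {n m : ℕ} {φ ψ : List α → List α} {x y : ℕ → ℕ} (hφ : IsEmb n φ x)
    (hψ : IsEmb m ψ y) (hx : ∀ i ≤ n, x i ≤ m) : IsEmb n (ψ ∘ φ) (y ∘ x) := by
  obtain ⟨hxmono, hφlen, hφpre⟩ := hφ
  obtain ⟨hymono, hψlen, hψpre⟩ := hψ
  have hφt : ∀ t : List α, t.length ≤ n → (φ t).length ≤ m := fun t ht => by
    rw [hφlen t ht]; exact hx _ ht
  refine ⟨fun a ha b hb hab => hymono (hx a ha) (hx b hb) (hxmono ha hb hab), fun t ht => ?_,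
    fun s t hs ht i hst => hψpre _ _ (hφt s hs) (hφt t ht) i (hφpre s t hs ht i hst)⟩
  simp only [Function.comp, hψlen _ (hφt t ht), hφlen t ht]

theorem isEmb_const (r : List α) : IsEmb 0 (fun _ => r) (fun _ => r.length) := by
  refine ⟨fun a ha b hb hab => ?_, fun _ _ => rfl, fun s t hs _ i hst => ?_⟩
  · simp only [Set.mem_Iic] at ha hb; omega
  · have := hst.length_le; simp at this; omega

def node (r : List α) (φ : α → List α → List α) : List α → List α
  | [] => r
  | i :: t => φ i t

def consLevel (x₀ : ℕ) (x : ℕ → ℕ) : ℕ → ℕ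
  | 0 => x₀
  | m + 1 => x m

theorem strictMonoOn_consLevel {n x₀ : ℕ} {x : ℕ → ℕ} (hx : StrictMonoOn x (Set.Iic n))
    (hx₀ : x₀ < x 0) : StrictMonoOn (consLevel x₀ x) (Set.Iic (n + 1)) := by
  rintro (_ | a) ha (_ | b) hb hab
  · exact absurd hab (lt_irrefl 0)
  · simp only [Set.mem_Iic] at hb
    exact hx₀.trans_le (hx.monotoneOn (by simp) (by simp; omega) (Nat.zero_le b))
  · exact absurd hab (Nat.not_lt_zero _)
  · simp only [Set.mem_Iic] at ha hb
    exact hx (by simp; omega) (by simp; omega) (by omega)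

theorem IsEmb.node {n : ℕ} {r : List α} {φ : α → List α → List α} {x : ℕ → ℕ}
    (hx : StrictMonoOn x (Set.Iic n)) (hr : r.length < x 0) (hφ : ∀ i, IsEmb n (φ i) x)
    (hroot : ∀ i t, t.length ≤ n → r ++ [i] <+: φ i t) :
    IsEmb (n + 1) (TreeEmbedding.node r φ) (consLevel r.length x) := by
  refine ⟨strictMonoOn_consLevel hx hr, ?_, ?_⟩
  · rintro (_ | ⟨i, t⟩) ht
    · rfl
    · exact (hφ i).2.1 t (by simpa using ht)
  · rintro (_ | ⟨j, s⟩) (_ | ⟨l, t⟩) hs ht i hst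
    · simp at hst
    · simp at hst
    · obtain rfl : i = j := by simpa using hst
      exact hroot i s (by simpa using hs)
    · rw [List.cons_append, List.cons_prefix_cons] at hst
      obtain ⟨rfl, hst⟩ := hst
      exact (hφ l).2.2 s t (by simpa using hs) (by simpa using ht) i hst

/-- Sharing the level function `x` is what lets the embeddings be glued under common roots. -/
def IsEmbFamily {ι : Type*} (n : ℕ) (P : List α → Prop) (v : ι → List α) (x : ℕ → ℕ) : Prop :=
  StrictMonoOn x (Set.Iic n) ∧
    ∀ a, ∃ φ, IsEmb n φ x ∧ ∀ t : List α, t.length ≤ n → v a <+: φ t ∧ P (φ t)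

theorem IsEmbFamily.leaf {ι : Type*} {P : List α → Prop} {v : ι → List α} {L : ℕ}
    (r : ι → List α) (hr : ∀ a, v a <+: r a ∧ (r a).length = L ∧ P (r a)) :
    IsEmbFamily 0 P v (fun _ => L) := by
  refine ⟨fun a ha b hb hab => ?_, fun a => ⟨fun _ => r a, ?_, fun _ _ => ⟨(hr a).1, (hr a).2.2⟩⟩⟩
  · simp only [Set.mem_Iic] at ha hb; omega
  · simpa only [(hr a).2.1] using isEmb_const (r a)

theorem IsEmbFamily.node {ι : Type*} {n : ℕ} {P : List α → Prop} {v : ι → List α} {x : ℕ → ℕ}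
    {L : ℕ} (r : ι → List α) (hr : ∀ a, v a <+: r a ∧ (r a).length = L ∧ P (r a))
    (hL : L < x 0) (h : IsEmbFamily n P (fun p : ι × α => r p.1 ++ [p.2]) x) :
    IsEmbFamily (n + 1) P v (consLevel L x) := by
  choose φ hφ hφroot using h.2
  refine ⟨strictMonoOn_consLevel h.1 hL, fun a =>
    ⟨TreeEmbedding.node (r a) (fun i => φ (a, i)), ?_, ?_⟩⟩
  · obtain ⟨-, hlen, -⟩ := hr a
    subst hlen
    exact IsEmb.node h.1 hL (fun i => hφ (a, i)) fun i t ht => (hφroot (a, i) t ht).1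
  · rintro (_ | ⟨i, t⟩) ht
    · exact ⟨(hr a).1, (hr a).2.2⟩
    · obtain ⟨hpre, hP⟩ := hφroot (a, i) t (by simpa using ht)
      exact ⟨(hr a).1.trans ((List.prefix_append _ _).trans hpre), hP⟩

theorem exists_prefix_length_eq [Nonempty α] {v : List α} {L : ℕ} (h : v.length ≤ L) :
    ∃ w, v <+: w ∧ w.length = L :=
  ⟨v ++ List.replicate (L - v.length) (Classical.arbitrary α), List.prefix_append _ _,
    by simp; omega⟩

def IsFullLevel (Q : List α → Prop) (v : List α) (L : ℕ) : Prop :=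
  ∀ w, v <+: w → w.length = L → Q w

theorem IsFullLevel.of_prefix {Q : List α → Prop} {v v' : List α} {L : ℕ} (hv : v <+: v')
    (h : IsFullLevel Q v L) : IsFullLevel Q v' L :=
  fun w hw hL => h w (hv.trans hw) hL

theorem exists_roots_of_isFullLevel [Nonempty α] {Q : List α → Prop} {ι : Type*}
    {v : ι → List α} {S : Finset ℕ} (hS : S.Nonempty)
    (hfull : ∀ L ∈ S, ∀ a, (v a).length ≤ L ∧ IsFullLevel Q (v a) L) :
    ∃ r : ι → List α, ∀ a, v a <+: r a ∧ (r a).length = S.min' hS ∧ Q (r a) := by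
  choose r hr using fun a => exists_prefix_length_eq (hfull _ (S.min'_mem hS) a).1
  exact ⟨r, fun a => ⟨(hr a).1, (hr a).2, (hfull _ (S.min'_mem hS) a).2 _ (hr a).1 (hr a).2⟩⟩

theorem IsEmbFamily.exists_of_isFullLevel [Nonempty α] (Q : List α → Prop) (n : ℕ)
    {ι : Type u} (v : ι → List α) (S : Finset ℕ) (hS : n < #S)
    (hfull : ∀ L ∈ S, ∀ a, (v a).length ≤ L ∧ IsFullLevel Q (v a) L) :
    ∃ x, (∀ m ≤ n, x m ∈ S) ∧ IsEmbFamily n Q v x := by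
  induction n generalizing ι S with
  | zero =>
    have hne : S.Nonempty := card_pos.mp hS
    obtain ⟨r, hr⟩ := exists_roots_of_isFullLevel hne hfull
    exact ⟨fun _ => S.min' hne, fun _ _ => S.min'_mem hne, IsEmbFamily.leaf r hr⟩
  | succ n ih =>
    have hne : S.Nonempty := card_pos.mp (by omega)
    obtain ⟨r, hr⟩ := exists_roots_of_isFullLevel hne hfull
    have hlt : ∀ L ∈ S.erase (S.min' hne), S.min' hne < L :=
      fun _ hL => S.min'_lt_of_mem_erase_min' hne hL
    have hfull' : ∀ L ∈ S.erase (S.min' hne), ∀ p : ι × α,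
        (r p.1 ++ [p.2]).length ≤ L ∧ IsFullLevel Q (r p.1 ++ [p.2]) L := fun L hL ⟨a, _⟩ =>
      ⟨by simp [(hr a).2.1, hlt L hL],
        (hfull L (mem_of_mem_erase hL) a).2.of_prefix ((hr a).1.trans (List.prefix_append _ _))⟩
    obtain ⟨x, hxS, hx⟩ := ih _ (S.erase (S.min' hne))
      (by rw [card_erase_of_mem (S.min'_mem hne)]; omega) hfull'
    refine ⟨consLevel (S.min' hne) x, ?_, hx.node r hr (hlt _ (hxS 0 (Nat.zero_le n)))⟩
    rintro (_ | m) hm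
    · exact S.min'_mem hne
    · exact mem_of_mem_erase (hxS m (by omega))

theorem exists_level_or_isFullLevel {ι : Type*} [Fintype ι] (Q : List α → Prop)
    (v : ι → List α) (B n : ℕ) :
    (∃ L ∈ Icc B (B + Fintype.card ι * n), ∀ a, ∃ w, v a <+: w ∧ w.length = L ∧ ¬Q w) ∨
      ∃ a, ∃ S ⊆ Icc B (B + Fintype.card ι * n), n < #S ∧ ∀ L ∈ S, IsFullLevel Q (v a) L := by
  classical
  refine or_iff_not_imp_left.mpr fun hbad => ?_
  push Not at hbad
  set W := Icc B (B + Fintype.card ι * n)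
  suffices ∃ a, n < #{L ∈ W | IsFullLevel Q (v a) L} from
    this.imp fun a ha => ⟨_, filter_subset _ _, ha, fun L hL => (mem_filter.mp hL).2⟩
  by_contra! hsmall
  have hcover : W ⊆ univ.biUnion fun a => {L ∈ W | IsFullLevel Q (v a) L} := by
    intro L hL
    obtain ⟨a, ha⟩ := hbad L hL
    simp only [mem_biUnion, mem_univ, mem_filter, true_and]
    exact ⟨a, hL, ha⟩
  have := (card_le_card hcover).trans (card_biUnion_le_card_mul _ _ _ fun a _ => hsmall a)
  simp only [W, Nat.card_Icc, card_univ] at this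
  omega

theorem exists_monochromatic_or_roots [Nonempty α] {ι : Type*} [Fintype ι]
    (Q : List α → Prop) (n : ℕ) (v : ι → List α) (B : ℕ) (hv : ∀ a, (v a).length ≤ B) :
    (∃ φ x, IsEmb n φ x ∧ (∀ m ≤ n, x m ≤ B + Fintype.card ι * n) ∧
        ∀ t : List α, t.length ≤ n → Q (φ t)) ∨
      ∃ L ∈ Icc B (B + Fintype.card ι * n), ∃ r : ι → List α,
        ∀ a, v a <+: r a ∧ (r a).length = L ∧ ¬Q (r a) := by
  rcases exists_level_or_isFullLevel Q v B n with ⟨L, hL, hw⟩ | ⟨a, S, hSW, hS, hfull⟩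
  · choose r hr using hw
    exact Or.inr ⟨L, hL, r, hr⟩
  · obtain ⟨x, hxS, hx⟩ := IsEmbFamily.exists_of_isFullLevel Q n (fun _ : PUnit.{u + 1} => v a)
      S hS fun L hL _ => ⟨(hv a).trans (mem_Icc.mp (hSW hL)).1, hfull L hL⟩
    obtain ⟨φ, hφ, hφQ⟩ := hx.2 PUnit.unit
    exact Or.inl
      ⟨φ, x, hφ, fun m hm => (mem_Icc.mp (hSW (hxS m hm))).2, fun t ht => (hφQ t ht).2⟩

theorem exists_monochromatic_or_avoiding_family [Fintype α] [Nonempty α] (n J : ℕ)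
    (ι : Type u) [Fintype ι] :
    ∃ D, ∀ (Q : List α → Prop) (v : ι → List α) (B : ℕ), (∀ a, (v a).length ≤ B) →
      (∃ φ x, IsEmb n φ x ∧ (∀ m ≤ n, x m ≤ B + D) ∧ ∀ t : List α, t.length ≤ n → Q (φ t)) ∨
        ∃ x, (∀ m ≤ J, B ≤ x m ∧ x m ≤ B + D) ∧ IsEmbFamily J (fun w => ¬Q w) v x := by
  induction J generalizing ι with
  | zero =>
    refine ⟨Fintype.card ι * n, fun Q v B hv => ?_⟩
    rcases exists_monochromatic_or_roots Q n v B hv with hmono | ⟨L, hL, r, hr⟩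
    · exact Or.inl hmono
    · exact Or.inr ⟨fun _ => L, fun _ _ => mem_Icc.mp hL, IsEmbFamily.leaf r hr⟩
  | succ J ih =>
    obtain ⟨D, hD⟩ := ih (ι × α)
    refine ⟨Fintype.card ι * n + 1 + D, fun Q v B hv => ?_⟩
    rcases exists_monochromatic_or_roots Q n v B hv with ⟨φ, x, hφ, hx, hQ⟩ | ⟨L, hL, r, hr⟩
    · exact Or.inl ⟨φ, x, hφ, fun m hm => (hx m hm).trans (by omega), hQ⟩
    rw [mem_Icc] at hL
    rcases hD Q (fun p => r p.1 ++ [p.2]) (L + 1) (fun p => by simp [(hr p.1).2.1]) with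
      ⟨φ, x, hφ, hx, hQ⟩ | ⟨x, hx, hfam⟩
    · exact Or.inl ⟨φ, x, hφ, fun m hm => (hx m hm).trans (by omega), hQ⟩
    · refine Or.inr ⟨consLevel L x, ?_, hfam.node r hr (hx 0 (Nat.zero_le J)).1⟩
      rintro (_ | m) hm
      · exact ⟨hL.1, hL.2.trans (by omega)⟩
      · have := hx m (by omega)
        simp only [consLevel]
        omega

theorem exists_monochromatic_emb [Fintype α] [Nonempty α] {β : Type*} (C : Finset β) (n : ℕ) :
    ∃ E, ∀ χ : List α → β, (∀ t : List α, t.length ≤ E → χ t ∈ C) →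
      ∃ φ x, IsEmb n φ x ∧ (∀ i ≤ n, x i ≤ E) ∧
        ∃ col, ∀ t : List α, t.length ≤ n → χ (φ t) = col := by
  classical
  induction C using Finset.induction_on with
  | empty => exact ⟨0, fun χ hχ => absurd (hχ [] le_rfl) (notMem_empty _)⟩
  | insert γ C _ ih =>
    obtain ⟨J, hJ⟩ := ih
    obtain ⟨D, hD⟩ := exists_monochromatic_or_avoiding_family (α := α) n J PUnit
    refine ⟨D, fun χ hχ => ?_⟩
    rcases hD (fun w => χ w = γ) (fun _ => []) 0 (fun _ => Nat.zero_le _) with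
      ⟨φ, x, hφ, hx, hγ⟩ | ⟨y, hy, hfam⟩
    · exact ⟨φ, x, hφ, fun i hi => by simpa using hx i hi, γ, hγ⟩
    obtain ⟨ψ, hψ, hψγ⟩ := hfam.2 PUnit.unit
    have hψC : ∀ t : List α, t.length ≤ J → χ (ψ t) ∈ C := fun t ht =>
      (mem_insert.mp (hχ _ (by rw [hψ.2.1 t ht]; simpa using (hy _ ht).2))).resolve_left
        (hψγ t ht).2
    obtain ⟨φ, x, hφ, hx, col, hcol⟩ := hJ (χ ∘ ψ) hψC
    exact ⟨ψ ∘ φ, y ∘ x, hφ.comp hψ hx, fun i hi => by simpa using (hy _ (hx i hi)).2, col, hcol⟩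

end TreeEmbedding

theorem tree_embedding_lemma_general (k c n : ℕ) (hk : 1 ≤ k) :
    ∃ E : ℕ, ∀ χ : List (Fin k) → Fin c,
      ∃ (φ : List (Fin k) → List (Fin k)) (x : ℕ → ℕ),
        StrictMonoOn x (Set.Iic n) ∧
        (∀ i ≤ n, x i ≤ E) ∧
        (∀ t : List (Fin k), t.length ≤ n → (φ t).length = x t.length) ∧
        (∀ s t : List (Fin k), s.length ≤ n → t.length ≤ n → ∀ i : Fin k,
          (t ++ [i]) <+: s → (φ t ++ [i]) <+: φ s) ∧
        ∃ col : Fin c, ∀ t : List (Fin k), t.length ≤ n → χ (φ t) = col := by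
  have : Nonempty (Fin k) := ⟨⟨0, hk⟩⟩
  obtain ⟨E, hE⟩ := TreeEmbedding.exists_monochromatic_emb (α := Fin k) (univ : Finset (Fin c)) n
  refine ⟨E, fun χ => ?_⟩
  obtain ⟨φ, x, ⟨hmono, hlen, hpre⟩, hx, col, hcol⟩ := hE χ fun _ _ => mem_univ _
  exact ⟨φ, x, hmono, hx, hlen, hpre, col, hcol⟩

/-- Nodes of the perfect `k`-ary tree are strings over `{1, …, k}` (here `List (Fin k)`),
a node of level `j` being a string of length `j`; the tree of height `n` consists of the
strings of length at most `n`. An embedding of the tree of height `n` into the tree of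
height `E` is a map `φ` together with a strictly increasing level function `x` such that
nodes of level `i` map to level `x i`, and if `t·i` is a prefix of `s` then `φ(t)·i` is a
prefix of `φ(s)`.

**Lemma (tree embedding).** For every `k, c, n ≥ 1` there is an `E = E(k,c,n)` so that every
`c`-coloring of the `k`-ary tree of height `E` admits a monochromatic embedded copy of the
`k`-ary tree of height `n`. -/
theorem tree_embedding_lemma (k c n : ℕ) (hk : 1 ≤ k) (hc : 1 ≤ c) (hn : 1 ≤ n) :
    ∃ E : ℕ, ∀ χ : List (Fin k) → Fin c,
      ∃ (φ : List (Fin k) → List (Fin k)) (x : ℕ → ℕ),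
        StrictMonoOn x (Set.Iic n) ∧
        (∀ i ≤ n, x i ≤ E) ∧
        (∀ t : List (Fin k), t.length ≤ n → (φ t).length = x t.length) ∧
        (∀ s t : List (Fin k), s.length ≤ n → t.length ≤ n → ∀ i : Fin k,
          (t ++ [i]) <+: s → (φ t ++ [i]) <+: φ s) ∧
        ∃ col : Fin c, ∀ t : List (Fin k), t.length ≤ n → χ (φ t) = col :=
  tree_embedding_lemma_general k c n hk
end

section
/- For every k ≥ 1 and c ≥ 1 there is a number f(k,c) such that for every n ≥ f(k,c), every c-coloring of the perfect k-ary tree of height n is 1-balanced. -/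
open Filter

/-- A `c`-coloring `χ` of the perfect `k`-ary tree of height `n` (nodes: strings over
`{1, …, k}`, modelled as `List (Fin k)`, of length at most `n`) is *1-balanced* if there are
a node `r`, a number `j`, and strings `s₁, …, s_k` each of length `j` such that the nodes
`r, r·1·s₁, …, r·k·s_k` all lie in the tree and receive the same color. -/
def IsOneBalanced (k c n : ℕ) (χ : List (Fin k) → Fin c) : Prop :=
  ∃ (r : List (Fin k)) (j : ℕ) (s : Fin k → List (Fin k)),
    (∀ i, (s i).length = j) ∧
    r.length + 1 + j ≤ n ∧
    ∀ i : Fin k, χ (r ++ i :: s i) = χ r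

private lemma ultra_exists_fin {α : Type*} (U : Ultrafilter α) {c : ℕ}
    (f : Fin c → Set α) (h : (⋃ a, f a) ∈ U) : ∃ a, f a ∈ U := by
  by_contra hn
  push_neg at hn
  have hcompl : ∀ a, (f a)ᶜ ∈ U := fun a => (Ultrafilter.compl_mem_iff_notMem).mpr (hn a)
  have h2 : (⋂ a, (f a)ᶜ) ∈ U := Filter.iInter_mem.mpr hcompl
  obtain ⟨x, hx1, hx2⟩ := Ultrafilter.nonempty_of_mem (Filter.inter_mem h h2)
  obtain ⟨a, ha⟩ := Set.mem_iUnion.mp hx1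
  exact (Set.mem_iInter.mp hx2 a) ha

private lemma infinite_one_balanced (k c : ℕ) (hk : 1 ≤ k)
    (χ : List (Fin k) → Fin c) :
    ∃ (r : List (Fin k)) (j : ℕ) (s : Fin k → List (Fin k)),
      (∀ i, (s i).length = j) ∧ ∀ i : Fin k, χ (r ++ i :: s i) = χ r := by
  classical
  obtain ⟨U, hU⟩ := Ultrafilter.exists_le (cofinite : Filter ℕ)
  set D : Fin c → List (Fin k) → Set ℕ :=
    fun a v => {L | ∃ t : List (Fin k), v.length + t.length = L ∧ χ (v ++ t) = a} with hD
  have hcof : ∀ N : ℕ, {n : ℕ | N ≤ n} ∈ U := by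
    intro N
    apply hU
    rw [mem_cofinite]
    have h1 : {n : ℕ | N ≤ n}ᶜ = Set.Iio N := by ext n; simp [Nat.not_le]
    rw [h1]; exact Set.finite_Iio N
  have hΛne : ∀ v, ∃ a, D a v ∈ U := by
    intro v
    apply ultra_exists_fin U
    refine Filter.mem_of_superset (hcof v.length) ?_
    intro L hL
    simp only [Set.mem_setOf_eq] at hL
    refine Set.mem_iUnion.mpr ⟨χ (v ++ List.replicate (L - v.length) ⟨0, hk⟩),
      List.replicate (L - v.length) ⟨0, hk⟩, ?_, rfl⟩
    simp only [List.length_replicate]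
    omega
  set Λ : List (Fin k) → Finset (Fin c) :=
    (fun v => Finset.univ.filter fun a => D a v ∈ U) with hΛ
  have hmemΛ : ∀ v a, a ∈ Λ v ↔ D a v ∈ U := by
    intro v a; simp [hΛ]
  have hdesc1 : ∀ (v) (i : Fin k), Λ (v ++ [i]) ⊆ Λ v := by
    intro v i a ha
    rw [hmemΛ] at ha ⊢
    refine Filter.mem_of_superset ha ?_
    rintro L ⟨t, hlen, hχt⟩
    refine ⟨i :: t, ?_, ?_⟩
    · simp only [List.length_append, List.length_cons, List.length_nil] at hlen ⊢
      omega
    · rw [← hχt]; congr 1; simp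
  have hdesc : ∀ v t, Λ (v ++ t) ⊆ Λ v := by
    intro v t
    induction t generalizing v with
    | nil => simp
    | cons x xs ih =>
      have h1 : v ++ x :: xs = (v ++ [x]) ++ xs := by simp
      rw [h1]
      exact (ih (v ++ [x])).trans (hdesc1 v x)
  set M : Set ℕ := Set.range fun v => (Λ v).card with hM
  have hMne : M.Nonempty := ⟨(Λ []).card, ⟨[], rfl⟩⟩
  obtain ⟨w, hw⟩ : ∃ w, (Λ w).card = sInf M := Nat.sInf_mem hMne
  have hmin : ∀ v, sInf M ≤ (Λ v).card := fun v => Nat.sInf_le ⟨v, rfl⟩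
  obtain ⟨a, haw⟩ := hΛne w
  obtain ⟨L0, t0, hlen0, hχ0⟩ := Ultrafilter.nonempty_of_mem haw
  set u := w ++ t0 with hu
  have hΛu : ∀ i : Fin k, a ∈ Λ (u ++ [i]) := by
    intro i
    have hsub : Λ (u ++ [i]) ⊆ Λ w := by
      have heq : u ++ [i] = w ++ (t0 ++ [i]) := by simp [hu]
      rw [heq]; exact hdesc w (t0 ++ [i])
    have heq2 : Λ (u ++ [i]) = Λ w :=
      Finset.eq_of_subset_of_card_le hsub (hw ▸ hmin _)
    rw [heq2, hmemΛ]; exact haw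
  have hbig : ∀ i : Fin k, D a (u ++ [i]) ∈ U := fun i => (hmemΛ _ _).mp (hΛu i)
  have hints : (⋂ i : Fin k, D a (u ++ [i])) ∈ U := Filter.iInter_mem.mpr hbig
  obtain ⟨L, hL⟩ := Ultrafilter.nonempty_of_mem hints
  have hLi : ∀ i : Fin k, ∃ t : List (Fin k),
      (u ++ [i]).length + t.length = L ∧ χ ((u ++ [i]) ++ t) = a :=
    fun i => Set.mem_iInter.mp hL i
  choose s hs1 hs2 using hLi
  refine ⟨u, L - (u.length + 1), s, ?_, ?_⟩
  · intro i
    have h1 := hs1 i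
    simp only [List.length_append, List.length_cons, List.length_nil] at h1
    omega
  · intro i
    have h1 : u ++ i :: s i = (u ++ [i]) ++ s i := by simp
    rw [h1, hs2 i]
    exact hχ0.symm

/-- **Lemma (balancing).** For every `k ≥ 1` and `c ≥ 1` there is an `f(k,c)` such that for
every `n ≥ f(k,c)`, every `c`-coloring of the perfect `k`-ary tree of height `n` is
1-balanced. -/
theorem tree_one_balanced (k c : ℕ) (hk : 1 ≤ k) (hc : 1 ≤ c) :
    ∃ f : ℕ, ∀ n, f ≤ n → ∀ χ : List (Fin k) → Fin c, IsOneBalanced k c n χ := by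
  classical
  by_contra hcon
  push_neg at hcon
  choose nf hnf χs hχs using hcon
  obtain ⟨V, hV⟩ := Ultrafilter.exists_le (cofinite : Filter ℕ)
  have hcof : ∀ N : ℕ, {m : ℕ | N ≤ m} ∈ V := by
    intro N
    apply hV
    rw [mem_cofinite]
    have h1 : {m : ℕ | N ≤ m}ᶜ = Set.Iio N := by ext m; simp [Nat.not_le]
    rw [h1]; exact Set.finite_Iio N
  have hlim : ∀ v : List (Fin k), ∃ a : Fin c, {m : ℕ | χs m v = a} ∈ V := by
    intro v
    apply ultra_exists_fin V
    have h1 : (⋃ a, {m : ℕ | χs m v = a}) = Set.univ := by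
      ext m; simp
    rw [h1]; exact Filter.univ_mem
  choose χ' hχ' using hlim
  obtain ⟨r, j, s, hlen, hcol⟩ := infinite_one_balanced k c hk χ'
  set N := r.length + 1 + j with hN
  have hmem : ({m | χs m r = χ' r} ∩
      ((⋂ i : Fin k, {m | χs m (r ++ i :: s i) = χ' (r ++ i :: s i)}) ∩ {m : ℕ | N ≤ m})) ∈ V :=
    Filter.inter_mem (hχ' r)
      (Filter.inter_mem (Filter.iInter_mem.mpr fun i => hχ' _) (hcof N))
  obtain ⟨m, hm1, hm2, hm3⟩ := Ultrafilter.nonempty_of_mem hmem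
  apply hχs m
  refine ⟨r, j, s, hlen, ?_, ?_⟩
  · exact le_trans hm3 (hnf m)
  · intro i
    have h2 := Set.mem_iInter.mp hm2 i
    simp only [Set.mem_setOf_eq] at h2 hm1
    rw [h2, hcol i, hm1]
end

section
/- Let k ≥ 2 and c ≥ 1, and suppose m ≥ 1 is such that every c-coloring of the perfect k-ary tree of height m is 1-balanced. Then every (c+1)-coloring of the perfect k-ary tree of height (c+1)·(1 + (k−1)·m) is 1-balanced. -/
/-- **Recurrence step:** if every `c`-coloring of the perfect `k`-ary tree of height `m` is
1-balanced (`k ≥ 2`, `c ≥ 1`, `m ≥ 1`), then every `(c+1)`-coloring of the perfect `k`-ary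
tree of height `(c+1)·(1 + (k−1)·m)` is 1-balanced. -/
theorem tree_one_balanced_step (k c m : ℕ) (hk : 2 ≤ k) (hc : 1 ≤ c) (hm : 1 ≤ m)
    (ih : ∀ χ : List (Fin k) → Fin c, IsOneBalanced k c m χ) :
    ∀ χ : List (Fin k) → Fin (c + 1),
      IsOneBalanced k (c + 1) ((c + 1) * (1 + (k - 1) * m)) χ := by
  intro χ
  by_contra hb
  set N := (c + 1) * (1 + (k - 1) * m) with hN
  set Λ := c * (m + 1) + 1 with hΛ
  have hk1 : 1 ≤ k - 1 := by omega
  have hmul1 : 1 * m ≤ (k - 1) * m := mul_le_mul_left hk1 m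
  rw [one_mul] at hmul1
  have hmul2 : (c + 1) * (m + 1) ≤ N := by
    rw [hN]
    exact mul_le_mul_right (by omega) (c + 1)
  have hcm : (c + 1) * (m + 1) = c * (m + 1) + (m + 1) := by ring
  have hΛN : Λ ≤ N := by omega
  -- (★): every color appears in every height-m window
  have star : ∀ u : List (Fin k), u.length + m ≤ N → ∀ γ : Fin (c + 1),
      ∃ w : List (Fin k), w.length ≤ m ∧ χ (u ++ w) = γ := by
    intro u hu γ
    by_contra hno
    push_neg at hno
    have key1 : ∀ z : Fin (c + 1), z ≠ γ → ((Equiv.swap γ (Fin.last c)) z).val < c := by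
      intro z hz
      have hzl : (Equiv.swap γ (Fin.last c)) z ≠ Fin.last c := by
        intro h
        apply hz
        apply (Equiv.swap γ (Fin.last c)).injective
        rw [h, Equiv.swap_apply_left]
      have h2 := ((Equiv.swap γ (Fin.last c)) z).isLt
      have h3 : ((Equiv.swap γ (Fin.last c)) z).val ≠ c := by
        intro h
        apply hzl
        apply Fin.val_injective
        simpa using h
      omega
    obtain ⟨r', j', s', hlen, hle, hcol⟩ :=
      ih (fun w => if h : ((Equiv.swap γ (Fin.last c)) (χ (u ++ w))).val < c
            then ⟨((Equiv.swap γ (Fin.last c)) (χ (u ++ w))).val, h⟩ else ⟨0, hc⟩)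
    apply hb
    refine ⟨u ++ r', j', s', hlen, ?_, ?_⟩
    · rw [List.length_append]
      omega
    · intro i
      have h1 : χ (u ++ (r' ++ i :: s' i)) ≠ γ := by
        apply hno
        rw [List.length_append, List.length_cons, hlen i]
        omega
      have h2 : χ (u ++ r') ≠ γ := by
        apply hno
        omega
      have hv1 := key1 _ h1
      have hv2 := key1 _ h2
      have hcol' := hcol i
      simp only [dif_pos hv1, dif_pos hv2, Fin.mk.injEq] at hcol'
      rw [List.append_assoc]
      exact (Equiv.swap γ (Fin.last c)).injective (Fin.val_injective hcol')
  -- (◊): some child direction's slice at level Λ omits the color of v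
  have dia : ∀ v : List (Fin k), v.length < Λ → ∃ l : Fin k,
      ∀ s : List (Fin k), s.length + (v.length + 1) = Λ → χ (v ++ l :: s) ≠ χ v := by
    intro v hv
    by_contra hno
    push_neg at hno
    choose sf h1 h2 using hno
    exact hb ⟨v, Λ - (v.length + 1), sf,
      fun i => by have := h1 i; omega, by omega, fun i => h2 i⟩
  -- main iteration: nested slices at level Λ omitting more and more colors
  have key : ∀ t : ℕ, t ≤ c → ∃ (u : List (Fin k)) (Ω : Finset (Fin (c + 1))),
      Ω.card = t + 1 ∧ u.length ≤ t * (m + 1) + 1 ∧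
      ∀ s : List (Fin k), s.length + u.length = Λ → χ (u ++ s) ∉ Ω := by
    intro t
    induction t with
    | zero =>
      intro _
      obtain ⟨l, hl⟩ := dia [] (by simp [hΛ])
      refine ⟨[l], {χ []}, by simp, by simp, ?_⟩
      intro s hs hmem
      rw [Finset.mem_singleton] at hmem
      exact hl s (by simpa using hs) (by simpa using hmem)
    | succ t IH =>
      intro ht
      obtain ⟨u, Ω, hcard, hulen, hΩ⟩ := IH (by omega)
      obtain ⟨γ, hγ⟩ : ∃ γ : Fin (c + 1), γ ∉ Ω := by
        by_contra h
        push_neg at h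
        have huniv : Ω = Finset.univ := Finset.eq_univ_iff_forall.mpr h
        rw [huniv] at hcard
        simp [Finset.card_univ] at hcard
        omega
      have hmt : (t + 1) * (m + 1) = t * (m + 1) + (m + 1) := by ring
      have hmc : (t + 1) * (m + 1) ≤ c * (m + 1) := mul_le_mul_left (by omega) (m + 1)
      obtain ⟨w, hwlen, hwχ⟩ := star u (by omega) γ
      obtain ⟨l, hl⟩ := dia (u ++ w) (by rw [List.length_append]; omega)
      refine ⟨(u ++ w) ++ [l], insert γ Ω, ?_, ?_, ?_⟩
      · rw [Finset.card_insert_of_notMem hγ, hcard]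
      · simp only [List.length_append, List.length_cons, List.length_nil]
        omega
      · intro s hs hmem
        have hs' : s.length + ((u ++ w).length + 1) = Λ := by
          simp only [List.length_append, List.length_cons, List.length_nil] at hs ⊢
          omega
        have heq : ((u ++ w) ++ [l]) ++ s = (u ++ w) ++ l :: s := by
          simp [List.append_assoc]
        rcases Finset.mem_insert.mp hmem with h | h
        · rw [heq] at h
          exact hl s hs' (by rw [h, hwχ])
        · have heq2 : ((u ++ w) ++ [l]) ++ s = u ++ (w ++ l :: s) := by
            simp [List.append_assoc]
          rw [heq2] at h
          have hlen3 : (w ++ l :: s).length + u.length = Λ := by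
            simp only [List.length_append, List.length_cons, List.length_nil] at hs ⊢
            omega
          exact hΩ (w ++ l :: s) hlen3 h
  obtain ⟨u, Ω, hcard, hulen, hΩ⟩ := key c le_rfl
  have huniv : Ω = Finset.univ := Finset.eq_univ_of_card _ (by simp [hcard])
  have hulen' : u.length ≤ Λ := by omega
  have hfin := hΩ (List.replicate (Λ - u.length) (⟨0, by omega⟩ : Fin k))
    (by simp [List.length_replicate]; omega)
  exact hfin (by rw [huniv]; exact Finset.mem_univ _)
end

section
/- For all integers k ≥ 2 and c ≥ 2, every c-coloring of the perfect k-ary tree of height ⌊e^{1/(k−1)} · (k−1)^{c−1} · c!⌋ is 1-balanced (here e is the base of the natural logarithm and ⌊·⌋ is the floor function). -/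
open Real

def levelBound (k : ℕ) : ℕ → ℕ
  | 0 => 1
  | m + 1 => k * levelBound k m + 1

lemma List.exists_prefix_length_eq {α : Type*} (v : List α) (a : α) {ℓ : ℕ}
    (h : v.length ≤ ℓ) : ∃ w, v <+: w ∧ w.length = ℓ :=
  ⟨v ++ List.replicate (ℓ - v.length) a, List.prefix_append _ _, by simp; omega⟩

section Coloring

variable {k c : ℕ} (χ : List (Fin k) → Fin c)

def IsBalancedAt (u : List (Fin k)) (ℓ : ℕ) : Prop :=
  ∀ i : Fin k, ∃ w, u ++ [i] <+: w ∧ w.length = ℓ ∧ χ w = χ u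

variable {χ} in
lemma IsBalancedAt.isOneBalanced {u : List (Fin k)} {ℓ n : ℕ} (h : IsBalancedAt χ u ℓ)
    (hℓ : ℓ ∈ Finset.Ioc u.length n) : IsOneBalanced k c n χ := by
  rw [Finset.mem_Ioc] at hℓ
  choose w hpre hlen hcol using h
  choose s hs using hpre
  have hs_len (i : Fin k) : (s i).length = ℓ - u.length - 1 := by
    have := congrArg List.length (hs i)
    simp only [List.length_append, List.length_singleton, hlen] at this
    omega
  refine ⟨u, ℓ - u.length - 1, s, hs_len, by omega, fun i => ?_⟩
  rw [← hcol i, ← hs i, List.append_assoc, List.singleton_append]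

lemma exists_child_avoiding_color {u : List (Fin k)} {L : Finset ℕ} {N : ℕ}
    (hL : k * N < L.card) (hunbal : ∀ ℓ ∈ L, ¬ IsBalancedAt χ u ℓ) :
    ∃ i : Fin k, ∃ L' ⊆ L, N < L'.card ∧
      ∀ w, u ++ [i] <+: w → w.length ∈ L' → χ w ≠ χ u := by
  simp only [IsBalancedAt, not_forall, not_exists, not_and] at hunbal
  obtain ⟨ℓ₀, hℓ₀⟩ := Finset.card_pos.mp (Nat.zero_lt_of_lt hL)
  have : Nonempty (Fin k) := ⟨(hunbal ℓ₀ hℓ₀).choose⟩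
  choose! b hb using hunbal
  obtain ⟨i, -, hi⟩ := Finset.exists_lt_card_fiber_of_mul_lt_card_of_maps_to
    (fun ℓ _ => Finset.mem_univ (b ℓ)) (by simpa using hL)
  refine ⟨i, _, Finset.filter_subset _ L, hi, fun w hw hwi => ?_⟩
  obtain ⟨hwL, rfl⟩ := Finset.mem_filter.mp hwi
  exact hb _ hwL w hw rfl

theorem isOneBalanced_of_levelBound_le_card {n m : ℕ} (S : Finset (Fin c))
    (hS : S.card ≤ m + 1) (u : List (Fin k)) (L : Finset ℕ) (hL : L ⊆ Finset.Ioc u.length n)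
    (hLcard : levelBound k m ≤ L.card) (hu : χ u ∈ S)
    (hcol : ∀ w, u <+: w → w.length ∈ L → χ w ∈ S) : IsOneBalanced k c n χ := by
  induction m generalizing S u L with
  | zero =>
    obtain ⟨ℓ, hℓ⟩ : L.Nonempty := Finset.card_pos.mp (by simpa [levelBound] using hLcard)
    have hℓu := Finset.mem_Ioc.mp (hL hℓ)
    refine IsBalancedAt.isOneBalanced (fun i => ?_) (hL hℓ)
    obtain ⟨w, hw, hwlen⟩ := (u ++ [i]).exists_prefix_length_eq i (ℓ := ℓ) (by simp; omega)
    have hwS := hcol w ((List.prefix_append _ _).trans hw) (hwlen ▸ hℓ)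
    exact ⟨w, hw, hwlen, Finset.card_le_one.mp hS _ hwS _ hu⟩
  | succ m ih =>
    by_cases hbal : ∃ ℓ ∈ L, IsBalancedAt χ u ℓ
    · obtain ⟨ℓ, hℓ, h⟩ := hbal
      exact h.isOneBalanced (hL hℓ)
    push Not at hbal
    obtain ⟨i, L', hL'L, hL'card, hL'avoid⟩ := exists_child_avoiding_color χ
      (by simpa [levelBound, Nat.lt_succ_iff] using hLcard) hbal
    have hL'ne : L'.Nonempty := Finset.card_pos.mp (Nat.zero_lt_of_lt hL'card)
    set ℓ := L'.min' hL'ne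
    have hℓu := Finset.mem_Ioc.mp (hL (hL'L (L'.min'_mem hL'ne)))
    obtain ⟨v, hv, hvlen⟩ := (u ++ [i]).exists_prefix_length_eq i (ℓ := ℓ) (by simp; omega)
    have hcol' (w : List (Fin k)) (hw : v <+: w) (hwL : w.length ∈ L') :
        χ w ∈ S.erase (χ u) :=
      Finset.mem_erase.mpr ⟨hL'avoid w (hv.trans hw) hwL,
        hcol w (((List.prefix_append _ _).trans hv).trans hw) (hL'L hwL)⟩
    refine ih (S.erase (χ u)) ?_ v (L'.erase ℓ) ?_ ?_
      (hcol' v (List.prefix_refl v) (hvlen ▸ L'.min'_mem hL'ne))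
      (fun w hw hwL => hcol' w hw (Finset.mem_of_mem_erase hwL))
    · rw [Finset.card_erase_of_mem hu]
      omega
    · intro x hx
      obtain ⟨hxℓ, hxL'⟩ := Finset.mem_erase.mp hx
      have hℓx := L'.min'_le x hxL'
      have hxn := (Finset.mem_Ioc.mp (hL (hL'L hxL'))).2
      exact Finset.mem_Ioc.mpr ⟨by omega, hxn⟩
    · rw [Finset.card_erase_of_mem (L'.min'_mem hL'ne)]
      omega

theorem isOneBalanced_of_levelBound_le {n : ℕ} (h : levelBound k (c - 1) ≤ n) :
    IsOneBalanced k c n χ :=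
  isOneBalanced_of_levelBound_le_card χ (m := c - 1) Finset.univ (by simp; omega) []
    (Finset.Ioc 0 n) subset_rfl (by simpa using h) (Finset.mem_univ _)
    (fun _ _ _ => Finset.mem_univ _)

end Coloring

lemma levelBound_add_le {k : ℕ} (hk : 2 ≤ k) (m : ℕ) :
    (levelBound k m : ℝ) + (exp (1 / (k - 1 : ℝ)) - 1) ≤
      exp (1 / (k - 1 : ℝ)) * (k - 1 : ℝ) ^ m * (m + 1).factorial := by
  set a : ℝ := k - 1 with ha_def
  set E := exp (1 / a)
  have ha : 1 ≤ a := by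
    have : (2 : ℝ) ≤ k := by exact_mod_cast hk
    linarith
  have haE : 1 ≤ a * (E - 1) := by
    have h := mul_le_mul_of_nonneg_left (add_one_le_exp (1 / a)) (by linarith : 0 ≤ a)
    rw [mul_add, mul_one_div_cancel (by positivity)] at h
    linarith
  induction m with
  | zero => simp [levelBound, E]
  | succ m ih =>
    set P := E * a ^ m * (m + 1).factorial
    have hP : 0 ≤ P := by positivity
    have hm : (0 : ℝ) ≤ m := m.cast_nonneg
    have hk_eq : (k : ℝ) = a + 1 := by rw [ha_def]; ring
    calc (levelBound k (m + 1) : ℝ) + (E - 1)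
        = (a + 1) * (levelBound k m + (E - 1)) - a * (E - 1) + 1 := by
          simp only [levelBound]; push_cast; rw [hk_eq]; ring
      _ ≤ (a + 1) * P := by nlinarith [mul_le_mul_of_nonneg_left ih (by linarith : 0 ≤ a + 1)]
      _ ≤ (m + 2) * a * P := by
          nlinarith [mul_nonneg (by nlinarith : (0 : ℝ) ≤ (m + 1) * a - 1) hP]
      _ = E * a ^ (m + 1) * (m + 1 + 1).factorial := by
          rw [Nat.factorial_succ (m + 1)]; push_cast; ring

lemma levelBound_le_floor {k : ℕ} (hk : 2 ≤ k) (c : ℕ) :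
    levelBound k (c - 1) ≤
      ⌊exp (1 / (k - 1 : ℝ)) * (k - 1 : ℝ) ^ (c - 1) * (Nat.factorial c : ℝ)⌋₊ := by
  apply Nat.le_floor
  have hE : 1 ≤ exp (1 / (k - 1 : ℝ)) := one_le_exp (by
    have : (2 : ℝ) ≤ k := by exact_mod_cast hk
    exact div_nonneg zero_le_one (by linarith))
  have hfac : (c - 1 + 1).factorial = c.factorial := by rcases c with _ | c <;> rfl
  have := levelBound_add_le hk (c - 1)
  rw [hfac] at this
  linarith

theorem tree_one_balanced_bound_general (k c : ℕ) (hk : 2 ≤ k) :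
    ∀ χ : List (Fin k) → Fin c,
      IsOneBalanced k c
        ⌊Real.exp (1 / (k - 1 : ℝ)) * (k - 1 : ℝ) ^ (c - 1) * (Nat.factorial c : ℝ)⌋₊
        χ :=
  fun χ => isOneBalanced_of_levelBound_le χ (levelBound_le_floor hk c)

/-- For `k, c ≥ 2`, every `c`-coloring of the perfect `k`-ary tree of height
`⌊e^{1/(k−1)} · (k−1)^{c−1} · c!⌋` is 1-balanced. -/
theorem tree_one_balanced_bound (k c : ℕ) (hk : 2 ≤ k) (hc : 2 ≤ c) :
    ∀ χ : List (Fin k) → Fin c,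
      IsOneBalanced k c
        ⌊Real.exp (1 / (k - 1 : ℝ)) * (k - 1 : ℝ) ^ (c - 1) * (Nat.factorial c : ℝ)⌋₊
        χ :=
  tree_one_balanced_bound_general k c hk
end

section
/- There exists a 2-edge-coloring χ of the complete graph on the positive integers such that for all positive integers a and d, the pairs {a, a+d} and {a, a+2d} receive different colors under χ; in particular, no 3-term arithmetic progression a, a+d, a+2d with d ≥ 1 is a monochromatic clique under χ. -/
/-!
Color `{x, y}` by the parity of the exponent of `2` in `|x - y|`. Doubling the difference `d`
raises that exponent by one, so `{a, a + d}` and `{a, a + 2d}` always get different colors.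
-/

open Fin.NatCast

lemma Fin.two_natCast_ne_natCast_succ (n : ℕ) : (n : Fin 2) ≠ ((n + 1 : ℕ) : Fin 2) := by
  rw [Nat.cast_succ]
  exact (add_ne_left.mpr one_ne_zero).symm

lemma Nat.dist_self_add_right (a d : ℕ) : Nat.dist a (a + d) = d := by
  rw [Nat.dist_eq_sub_of_le (Nat.le_add_right a d), Nat.add_sub_cancel_left]

lemma padicValNat_self_mul {p d : ℕ} [Fact p.Prime] (hd : d ≠ 0) :
    padicValNat p (p * d) = padicValNat p d + 1 := by
  rw [padicValNat.mul (Fact.out : p.Prime).ne_zero hd, padicValNat_self, add_comm]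

def twoAdicParityColoring : Sym2 ℕ → Fin 2 :=
  Sym2.lift ⟨fun x y => (padicValNat 2 (Nat.dist x y) : Fin 2),
    fun x y => by dsimp only; rw [Nat.dist_comm]⟩

lemma twoAdicParityColoring_mk (x y : ℕ) :
    twoAdicParityColoring s(x, y) = (padicValNat 2 (Nat.dist x y) : Fin 2) :=
  rfl

lemma twoAdicParityColoring_ne_of_double {d : ℕ} (a : ℕ) (hd : d ≠ 0) :
    twoAdicParityColoring s(a, a + d) ≠ twoAdicParityColoring s(a, a + 2 * d) := by
  rw [twoAdicParityColoring_mk, twoAdicParityColoring_mk, Nat.dist_self_add_right,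
    Nat.dist_self_add_right, padicValNat_self_mul hd]
  exact Fin.two_natCast_ne_natCast_succ _

lemma not_monochromatic_of_ne {α γ : Type*} [DecidableEq α] {χ : Sym2 α → γ} {a b c : α}
    (hab : a ≠ b) (hac : a ≠ c) (h : χ s(a, b) ≠ χ s(a, c)) :
    ¬ ∃ k : γ, ∀ x ∈ ({a, b, c} : Finset α), ∀ y ∈ ({a, b, c} : Finset α),
      x ≠ y → χ s(x, y) = k := by
  rintro ⟨k, hk⟩
  have hb : χ s(a, b) = k := hk a (by simp) b (by simp) hab
  have hc : χ s(a, c) = k := hk a (by simp) c (by simp) hac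
  exact h (hb.trans hc.symm)

/-- There is a 2-edge-coloring of the complete graph on the positive integers such that for
all `a, d ≥ 1` the edges `{a, a+d}` and `{a, a+2d}` get different colors; in particular no
3-term arithmetic progression is a monochromatic clique. -/
theorem no_monochromatic_three_ap :
    ∃ χ : Sym2 ℕ → Fin 2,
      (∀ a d : ℕ, 0 < a → 0 < d → χ s(a, a + d) ≠ χ s(a, a + 2 * d)) ∧
      (∀ a d : ℕ, 0 < a → 0 < d →
        ¬ ∃ c : Fin 2, ∀ x ∈ ({a, a + d, a + 2 * d} : Finset ℕ),
          ∀ y ∈ ({a, a + d, a + 2 * d} : Finset ℕ), x ≠ y → χ s(x, y) = c) := by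
  refine ⟨twoAdicParityColoring, fun a d _ hd => twoAdicParityColoring_ne_of_double a hd.ne',
    fun a d _ hd => not_monochromatic_of_ne (by omega) (by omega)
      (twoAdicParityColoring_ne_of_double a hd.ne')⟩
end

section
/- Let k ≥ 2 and let a₁, …, a_k, b be positive integers with aᵢ ≥ b for every i. There exists a 2-edge-coloring χ of the complete graph on the positive integers such that for all pairwise distinct positive integers x₁, …, x_k, z satisfying a₁x₁ + … + a_k x_k = b·z, there exist indices i and j with χ({xᵢ, z}) ≠ χ({xⱼ, z}); in particular, the set {x₁, …, x_k, z} is not a monochromatic clique under χ. -/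
/-- For `k ≥ 2` and positive integers `a₁, …, a_k, b` with `aᵢ ≥ b` for all `i`, there is a
2-edge-coloring of the complete graph on the positive integers such that any solution of
`a₁x₁ + ⋯ + a_k x_k = b·z` by pairwise distinct positive integers has two edges `{xᵢ, z}`,
`{xⱼ, z}` of different colors; in particular `{x₁, …, x_k, z}` is not a monochromatic
clique. -/
theorem no_monochromatic_generalized_schur (k : ℕ) (hk : 2 ≤ k)
    (a : Fin k → ℕ) (b : ℕ) (hb : 0 < b) (ha : ∀ i, b ≤ a i) :
    ∃ χ : Sym2 ℕ → Fin 2,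
      ∀ (x : Fin k → ℕ) (z : ℕ),
        (∀ i, 0 < x i) → 0 < z →
        Function.Injective x → (∀ i, x i ≠ z) →
        (∑ i, a i * x i) = b * z →
        (∃ i j : Fin k, χ s(x i, z) ≠ χ s(x j, z)) ∧
        ¬ ∃ c : Fin 2, ∀ u ∈ Set.range x ∪ {z}, ∀ v ∈ Set.range x ∪ {z},
            u ≠ v → χ s(u, v) = c := by
  haveI : Nontrivial (Fin k) := Fin.nontrivial_iff_two_le.mpr hk
  set M := ∑ i, a i with hM
  refine ⟨Sym2.lift ⟨fun u v => if M * min u v ≤ b * max u v then 0 else 1,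
    fun u v => by simp [min_comm, max_comm]⟩, ?_⟩
  intro x z hx hz hinj hne hsum
  have hlt : ∀ i, x i < z := by
    intro i
    obtain ⟨j, hj⟩ := exists_ne i
    have h1 : a i * x i < ∑ j, a j * x j :=
      Finset.single_lt_sum (f := fun m => a m * x m) hj (Finset.mem_univ i) (Finset.mem_univ j)
        (Nat.mul_pos (lt_of_lt_of_le hb (ha j)) (hx j)) (fun m _ _ => Nat.zero_le _)
    have h2 : b * x i ≤ a i * x i := Nat.mul_le_mul_right _ (ha i)
    have h3 : b * x i < b * z := lt_of_le_of_lt h2 (h1.trans_eq hsum)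
    exact lt_of_mul_lt_mul_left h3 (Nat.zero_le b)
  obtain ⟨i₀, -, hmin⟩ := Finset.exists_min_image Finset.univ x ⟨Classical.arbitrary _, Finset.mem_univ _⟩
  obtain ⟨i₁, -, hmax⟩ := Finset.exists_max_image Finset.univ x ⟨Classical.arbitrary _, Finset.mem_univ _⟩
  have hs0 : M * x i₀ < b * z := by
    obtain ⟨j, hj⟩ := exists_ne i₀
    have hstrict : x i₀ < x j :=
      lt_of_le_of_ne (hmin j (Finset.mem_univ j)) (fun h => hj (hinj h.symm))
    calc M * x i₀ = ∑ m, a m * x i₀ := Finset.sum_mul ..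
      _ < ∑ m, a m * x m := by
          refine Finset.sum_lt_sum (fun m _ => Nat.mul_le_mul_left _ (hmin m (Finset.mem_univ m)))
            ⟨j, Finset.mem_univ j, (Nat.mul_lt_mul_left (lt_of_lt_of_le hb (ha j))).mpr hstrict⟩
      _ = b * z := hsum
  have hs1 : b * z < M * x i₁ := by
    obtain ⟨j, hj⟩ := exists_ne i₁
    have hstrict : x j < x i₁ :=
      lt_of_le_of_ne (hmax j (Finset.mem_univ j)) (fun h => hj (hinj h))
    calc b * z = ∑ m, a m * x m := hsum.symm
      _ < ∑ m, a m * x i₁ := by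
          refine Finset.sum_lt_sum (fun m _ => Nat.mul_le_mul_left _ (hmax m (Finset.mem_univ m)))
            ⟨j, Finset.mem_univ j, (Nat.mul_lt_mul_left (lt_of_lt_of_le hb (ha j))).mpr hstrict⟩
      _ = M * x i₁ := (Finset.sum_mul ..).symm
  have hc0 : Sym2.lift ⟨fun u v => if M * min u v ≤ b * max u v then (0 : Fin 2) else 1,
      fun u v => by simp [min_comm, max_comm]⟩ s(x i₀, z) = 0 := by
    simp [min_eq_left (hlt i₀).le, max_eq_right (hlt i₀).le, hs0.le]
  have hc1 : Sym2.lift ⟨fun u v => if M * min u v ≤ b * max u v then (0 : Fin 2) else 1,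
      fun u v => by simp [min_comm, max_comm]⟩ s(x i₁, z) = 1 := by
    simp [min_eq_left (hlt i₁).le, max_eq_right (hlt i₁).le, not_le.mpr hs1]
  constructor
  · exact ⟨i₀, i₁, by rw [hc0, hc1]; decide⟩
  · rintro ⟨c, hc⟩
    have h0 := hc (x i₀) (Or.inl ⟨i₀, rfl⟩) z (Or.inr rfl) (hne i₀)
    have h1 := hc (x i₁) (Or.inl ⟨i₁, rfl⟩) z (Or.inr rfl) (hne i₁)
    rw [hc0] at h0
    rw [hc1] at h1
    rw [← h0] at h1
    exact absurd h1 (by decide)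
end

section
/- Let a, b, c be nonzero integers. There exists a 6-coloring χ of the 2-element subsets of ℤ such that for every triple of pairwise distinct integers x, y, z with a·x + b·y + c·z = 0, the three pairs {x,y}, {x,z}, {y,z} do not all receive the same color under χ. -/
/-!
If `a, b, c` all have the same sign, no solution by distinct integers has `x, y, z` all of one
sign, so colouring a pair by whether its entries have equal signs already works. Otherwise we may
assume `a, b > 0 > c`. Well-order the pairs `s(u, v)` so that `|u + v|` never decreases and colour
greedily: when `e = s(u, v)` is coloured it only has to avoid, for each solution triangle
`{u, v, w}` in which `e` is the largest pair, the colour of `s(u, w)`. Given the roles of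
`u, v, w` among `x, y, z` (six ways) the vertex `w` is determined, and it satisfies
`|u + w|, |v + w| ≤ |u + v|`. Comparing these bounds with the equations shows that the four roles
in which `w` has coefficient `b` or `c` cannot all occur, so at most five colours are excluded.
-/

def IsProperColoring {α κ : Type*} (E : Set (Set α)) (χ : α → κ) : Prop :=
  ∀ T ∈ E, (χ '' T).Nontrivial

def edgesWithTop {α : Type*} (r : α → α → Prop) (E : Set (Set α)) (e : α) : Set (Set α) :=
  {T ∈ E | e ∈ T ∧ ∀ f ∈ T, f ≠ e → r f e}

theorem exists_coloring_of_wellFounded {α κ : Type*} {r : α → α → Prop} (hr : WellFounded r)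
    (H : α → Set (Set α)) (hne : ∀ e, ∀ t ∈ H e, t.Nonempty)
    (hlt : ∀ e, ∀ t ∈ H e, ∀ f ∈ t, r f e) (hcard : ∀ e, (H e).encard < ENat.card κ) :
    ∃ χ : α → κ, ∀ e, ∀ t ∈ H e, ∃ f ∈ t, χ f ≠ χ e := by
  classical
  have hκ (e : α) : Nonempty κ := by
    rw [← ENat.card_ne_zero_iff_nonempty]; exact (pos_of_gt (hcard e)).ne'
  -- the colours that would make a hyperedge below `e` monochromatic together with `e`
  let blocked (e : α) (g : α → κ) : Set κ := {k | ∃ t ∈ H e, ∀ f ∈ t, g f = k}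
  have hfree (e : α) (g : α → κ) : ∃ k, k ∉ blocked e g := by
    have : Nonempty α := ⟨e⟩
    refine (Set.ne_univ_iff_exists_notMem _).mp fun huniv => (hcard e).not_ge ?_
    have hsub : blocked e g ⊆ (fun t => g (Classical.epsilon (· ∈ t))) '' H e := by
      rintro k ⟨t, ht, hk⟩
      exact ⟨t, ht, hk _ (Classical.epsilon_spec (hne e t ht))⟩
    calc ENat.card κ = (blocked e g).encard := by rw [huniv, Set.encard_univ]
      _ ≤ _ := Set.encard_le_encard hsub
      _ ≤ _ := Set.encard_image_le _ _
  choose pick hpick using hfree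
  let χ : α → κ := hr.fix fun e rec => pick e fun f => if h : r f e then rec f h else (hκ e).some
  refine ⟨χ, fun e t ht => ?_⟩
  by_contra! hmono
  apply hpick e fun f => if r f e then χ f else (hκ e).some
  refine ⟨t, ht, fun f hf => ?_⟩
  dsimp only
  rw [if_pos (hlt e t ht f hf), hmono f hf]
  exact hr.fix_eq _ e

theorem Set.Finite.exists_greatest_of_isStrictTotalOrder {α : Type*} {r : α → α → Prop}
    [IsStrictTotalOrder α r] {T : Set α} (hT : T.Finite) (hne : T.Nonempty) :
    ∃ e ∈ T, ∀ f ∈ T, f ≠ e → r f e := by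
  have : Finite T := hT
  obtain ⟨⟨e, heT⟩, -, he⟩ :=
    (Finite.wellFounded_of_trans_of_irrefl (fun f g : T => r g f)).has_min
      Set.univ ⟨⟨_, hne.some_mem⟩, trivial⟩
  refine ⟨e, heT, fun f hf hfe => ?_⟩
  exact (trichotomous_of r f e).resolve_right fun h => h.elim (hfe ·) (he ⟨f, hf⟩ trivial)

theorem exists_isProperColoring_of_isWellOrder {α κ : Type*} (r : α → α → Prop)
    [IsWellOrder α r] (E : Set (Set α)) (hE : ∀ T ∈ E, T.Finite ∧ T.Nontrivial)
    (hdeg : ∀ e, (edgesWithTop r E e).encard < ENat.card κ) :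
    ∃ χ : α → κ, IsProperColoring E χ := by
  obtain ⟨χ, hχ⟩ := exists_coloring_of_wellFounded (IsWellFounded.wf (r := r))
    (fun e => (· \ {e}) '' edgesWithTop r E e)
    (by
      rintro e _ ⟨T, ⟨hT, -, -⟩, rfl⟩
      exact Set.sdiff_nonempty.mpr (hE T hT).2.not_subset_singleton)
    (by
      rintro e _ ⟨T, ⟨-, -, htop⟩, rfl⟩ f ⟨hf, hfe⟩
      exact htop f hf hfe)
    (fun e => (Set.encard_image_le _ _).trans_lt (hdeg e))
  refine ⟨χ, fun T hT => ?_⟩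
  obtain ⟨e, he, htop⟩ :=
    (hE T hT).1.exists_greatest_of_isStrictTotalOrder (r := r) (hE T hT).2.nonempty
  obtain ⟨f, ⟨hf, -⟩, hfe⟩ := hχ e _ ⟨T, ⟨hT, he, htop⟩, rfl⟩
  exact ⟨χ f, ⟨f, hf, rfl⟩, χ e, ⟨e, he, rfl⟩, hfe⟩

section OrderedRing

variable {R : Type*} [CommRing R] [LinearOrder R] [IsStrictOrderedRing R]

theorem abs_two_mul_add_add_abs_sub_le {u v w s : R} (hu : |u + w| ≤ s) (hv : |v + w| ≤ s) :
    |2 * w + (u + v)| + |u - v| ≤ 2 * s := by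
  rw [abs_le] at hu hv
  rcases abs_cases (2 * w + (u + v)) with ⟨h, -⟩ | ⟨h, -⟩ <;>
    rcases abs_cases (u - v) with ⟨h', -⟩ | ⟨h', -⟩ <;> linarith

theorem abs_add_abs_le_of_mul_eq {γ X Y W₁ W₂ M : R} (h₁ : γ * W₁ = X + Y)
    (h₂ : γ * W₂ = X - Y) (hW₁ : |W₁| ≤ M) (hW₂ : |W₂| ≤ M) : |X| + |Y| ≤ |γ| * M := by
  have hs : |X + Y| ≤ |γ| * M := by rw [← h₁, abs_mul]; gcongr
  have hd : |X - Y| ≤ |γ| * M := by rw [← h₂, abs_mul]; gcongr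
  rw [abs_le] at hs hd
  rcases abs_cases X with ⟨h, -⟩ | ⟨h, -⟩ <;>
    rcases abs_cases Y with ⟨h', -⟩ | ⟨h', -⟩ <;> linarith

theorem false_of_four_completions {a b c u v w₁ w₂ w₃ w₄ : R} (ha : 0 < a) (hb : 0 < b)
    (hc : c < 0) (huv : u ≠ v)
    (h₁ : a * u + b * v + c * w₁ = 0) (h₂ : b * u + a * v + c * w₂ = 0)
    (h₃ : a * u + c * v + b * w₃ = 0) (h₄ : c * u + a * v + b * w₄ = 0)
    (hbox : ∀ w ∈ ({w₁, w₂, w₃, w₄} : Set R), |u + w| ≤ |u + v| ∧ |v + w| ≤ |u + v|) :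
    False := by
  set s := |u + v|
  set d := |u - v|
  have hs : 0 ≤ s := abs_nonneg _
  have hd : 0 < d := abs_pos.mpr (sub_ne_zero.mpr huv)
  have hcentered : ∀ w ∈ ({w₁, w₂, w₃, w₄} : Set R), |2 * w + (u + v)| ≤ 2 * s - d :=
    fun w hw => le_sub_iff_add_le.mpr (abs_two_mul_add_add_abs_sub_le (hbox w hw).1 (hbox w hw).2)
  have hI := abs_add_abs_le_of_mul_eq (γ := c) (X := -((a + b - c) * (u + v)))
    (Y := -((a - b) * (u - v))) (by linear_combination 2 * h₁) (by linear_combination 2 * h₂)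
    (hcentered w₁ (by simp)) (hcentered w₂ (by simp))
  have hII := abs_add_abs_le_of_mul_eq (γ := b) (X := -((a + c - b) * (u + v)))
    (Y := -((a - c) * (u - v))) (by linear_combination 2 * h₃) (by linear_combination 2 * h₄)
    (hcentered w₃ (by simp)) (hcentered w₄ (by simp))
  have hab : 0 < a + b - c := by linarith
  simp only [abs_neg, abs_mul, abs_of_neg hc, abs_of_pos hb, abs_of_pos hab,
    abs_of_pos (by linarith : 0 < a - c)] at hI hII
  -- `hI` forces `(a + b + c) s ≤ c d < 0`, while `hII` forces `(a + b + c) s ≥ (a + b - c) d > 0`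
  nlinarith [mul_pos hab hd, mul_pos (neg_pos.mpr hc) hd, mul_nonneg (abs_nonneg (a - b)) hd.le,
    mul_le_mul_of_nonneg_right (neg_le_abs (a + c - b)) hs]

end OrderedRing

namespace LinearEquationColoring

def triangle {α : Type*} (x y z : α) : Set (Sym2 α) := {s(x, y), s(x, z), s(y, z)}

theorem triangle_swap_left {α : Type*} (x y z : α) : triangle y x z = triangle x y z := by
  ext; simp only [triangle, Set.mem_insert_iff, Set.mem_singleton_iff, Sym2.eq_swap]; tauto

theorem triangle_swap_right {α : Type*} (x y z : α) : triangle x z y = triangle x y z := by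
  ext; simp only [triangle, Set.mem_insert_iff, Set.mem_singleton_iff, Sym2.eq_swap]; tauto

def solutionTriangles (a b c : ℤ) : Set (Set (Sym2 ℤ)) :=
  {T | ∃ x y z, x ≠ y ∧ x ≠ z ∧ y ≠ z ∧ a * x + b * y + c * z = 0 ∧ T = triangle x y z}

theorem finite_nontrivial_of_mem_solutionTriangles {a b c : ℤ} {T : Set (Sym2 ℤ)}
    (hT : T ∈ solutionTriangles a b c) : T.Finite ∧ T.Nontrivial := by
  obtain ⟨x, y, z, -, -, hyz, -, rfl⟩ := hT
  exact ⟨((Set.finite_singleton _).insert _).insert _, s(x, y), by simp [triangle], s(x, z),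
    by simp [triangle], mt Sym2.congr_right.mp hyz⟩

theorem solutionTriangles_swap_left (a b c : ℤ) :
    solutionTriangles b a c = solutionTriangles a b c := by
  have h (a b c : ℤ) : solutionTriangles b a c ⊆ solutionTriangles a b c := by
    rintro _ ⟨x, y, z, hxy, hxz, hyz, h, rfl⟩
    exact ⟨y, x, z, hxy.symm, hyz, hxz, by linarith, (triangle_swap_left _ _ _).symm⟩
  exact (h a b c).antisymm (h b a c)

theorem solutionTriangles_swap_right (a b c : ℤ) :
    solutionTriangles a c b = solutionTriangles a b c := by
  have h (a b c : ℤ) : solutionTriangles a c b ⊆ solutionTriangles a b c := by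
    rintro _ ⟨x, y, z, hxy, hxz, hyz, h, rfl⟩
    exact ⟨x, z, y, hxz, hxy, hyz.symm, by linarith, (triangle_swap_right _ _ _).symm⟩
  exact (h a b c).antisymm (h a c b)

theorem solutionTriangles_neg (a b c : ℤ) :
    solutionTriangles (-a) (-b) (-c) = solutionTriangles a b c := by
  ext T
  refine exists_congr fun x => exists_congr fun y => exists_congr fun z => ?_
  constructor <;> rintro ⟨hxy, hxz, hyz, h, rfl⟩ <;> exact ⟨hxy, hxz, hyz, by linarith, rfl⟩

/-- The coefficients of `a x + b y + c z` in all six orders, read as `t.1 * p + t.2.1 * q +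
t.2.2 * w` when `p, q, w` take the roles of the variables. -/
def roleTriples (a b c : ℤ) : Finset (ℤ × ℤ × ℤ) :=
  {(a, b, c), (b, a, c), (a, c, b), (c, a, b), (b, c, a), (c, b, a)}

def boxedCompletions (a b c p q : ℤ) : Set ℤ :=
  {w | (∃ t ∈ roleTriples a b c, t.1 * p + t.2.1 * q + t.2.2 * w = 0) ∧
    |p + w| ≤ |p + q| ∧ |q + w| ≤ |p + q|}

theorem encard_boxedCompletions_le {a b c p q : ℤ} (ha : 0 < a) (hb : 0 < b) (hc : c < 0)
    (hpq : p ≠ q) : (boxedCompletions a b c p q).encard ≤ 5 := by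
  obtain ⟨t₀, ht₀, hnone⟩ : ∃ t₀ ∈ roleTriples a b c,
      ∀ w ∈ boxedCompletions a b c p q, t₀.1 * p + t₀.2.1 * q + t₀.2.2 * w ≠ 0 := by
    by_contra! h
    obtain ⟨w₁, ⟨-, hw₁⟩, h₁⟩ := h (a, b, c) (by simp [roleTriples])
    obtain ⟨w₂, ⟨-, hw₂⟩, h₂⟩ := h (b, a, c) (by simp [roleTriples])
    obtain ⟨w₃, ⟨-, hw₃⟩, h₃⟩ := h (a, c, b) (by simp [roleTriples])
    obtain ⟨w₄, ⟨-, hw₄⟩, h₄⟩ := h (c, a, b) (by simp [roleTriples])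
    refine false_of_four_completions ha hb hc hpq h₁ h₂ h₃ h₄ ?_
    simp only [Set.mem_insert_iff, Set.mem_singleton_iff, forall_eq_or_imp, forall_eq]
    exact ⟨hw₁, hw₂, hw₃, hw₄⟩
  -- in each role `w` is determined by `p` and `q`, as its coefficient is nonzero
  let S := ((roleTriples a b c).erase t₀).image fun t => -(t.1 * p + t.2.1 * q) / t.2.2
  have hsub : boxedCompletions a b c p q ⊆ S := by
    rintro w hw
    obtain ⟨t, ht, hsolves⟩ := hw.1
    have hγ : t.2.2 ≠ 0 := by
      simp only [roleTriples, Finset.mem_insert, Finset.mem_singleton] at ht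
      rcases ht with rfl | rfl | rfl | rfl | rfl | rfl <;> simp <;> omega
    simp only [S, Finset.coe_image, Finset.coe_erase, Set.mem_image, Set.mem_sdiff,
      Finset.mem_coe, Set.mem_singleton_iff]
    exact ⟨t, ⟨ht, fun h => hnone w hw (h ▸ hsolves)⟩,
      (Int.eq_ediv_of_mul_eq_right hγ (by linear_combination hsolves)).symm⟩
  have hS : S.card ≤ 5 := by
    have h₁ : S.card ≤ ((roleTriples a b c).erase t₀).card := Finset.card_image_le
    have h₂ : (roleTriples a b c).card ≤ 6 := Finset.card_le_six
    rw [Finset.card_erase_of_mem ht₀] at h₁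
    omega
  calc (boxedCompletions a b c p q).encard ≤ (S : Set ℤ).encard := Set.encard_le_encard hsub
    _ ≤ 5 := by rw [Set.encard_coe_eq_coe_finsetCard]; exact_mod_cast hS

theorem exists_completion_of_mem_triangle {a b c x y z p q : ℤ} (hxy : x ≠ y) (hxz : x ≠ z)
    (hyz : y ≠ z) (h : a * x + b * y + c * z = 0) (hpq : s(p, q) ∈ triangle x y z) :
    p ≠ q ∧ ∃ w, w ≠ p ∧ w ≠ q ∧
      (∃ t ∈ roleTriples a b c, t.1 * p + t.2.1 * q + t.2.2 * w = 0) ∧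
      triangle x y z = triangle p q w := by
  simp only [triangle, Set.mem_insert_iff, Set.mem_singleton_iff, Sym2.eq_iff] at hpq
  rcases hpq with (⟨rfl, rfl⟩ | ⟨rfl, rfl⟩) | (⟨rfl, rfl⟩ | ⟨rfl, rfl⟩) | (⟨rfl, rfl⟩ | ⟨rfl, rfl⟩)
  · exact ⟨hxy, z, hxz.symm, hyz.symm, ⟨(a, b, c), by simp [roleTriples], h⟩, rfl⟩
  · exact ⟨hxy.symm, z, hyz.symm, hxz.symm, ⟨(b, a, c), by simp [roleTriples], by linarith⟩,
      (triangle_swap_left _ _ _).symm⟩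
  · exact ⟨hxz, y, hxy.symm, hyz, ⟨(a, c, b), by simp [roleTriples], by linarith⟩,
      (triangle_swap_right _ _ _).symm⟩
  · exact ⟨hxz.symm, y, hyz, hxy.symm, ⟨(c, a, b), by simp [roleTriples], by linarith⟩,
      by rw [triangle_swap_right, triangle_swap_left]⟩
  · exact ⟨hyz, x, hxy, hxz, ⟨(b, c, a), by simp [roleTriples], by linarith⟩,
      by rw [triangle_swap_left, triangle_swap_right]⟩
  · exact ⟨hyz.symm, x, hxz, hxy, ⟨(c, b, a), by simp [roleTriples], by linarith⟩,
      by rw [triangle_swap_left, triangle_swap_right, triangle_swap_left]⟩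

def sumKey (e : Sym2 ℤ) : ℕ × Sym2 ℤ :=
  (Sym2.lift ⟨fun u v => (u + v).natAbs, fun u v => congrArg Int.natAbs (add_comm u v)⟩ e, e)

def sumOrder : Sym2 ℤ → Sym2 ℤ → Prop :=
  (Prod.Lex (· < ·) WellOrderingRel).onFun sumKey

instance : IsWellOrder (Sym2 ℤ) sumOrder :=
  Function.Injective.isWellOrder (Prod.Lex (· < ·) WellOrderingRel) (f := sumKey)
    fun _ _ h => congrArg Prod.snd h

theorem abs_add_le_of_sumOrder {p q u v : ℤ} (h : sumOrder s(p, q) s(u, v)) :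
    |p + q| ≤ |u + v| := by
  have : (p + q).natAbs ≤ (u + v).natAbs := by
    rcases Prod.lex_def.mp h with h | ⟨h, -⟩
    · exact h.le
    · exact h.le
  rw [Int.abs_eq_natAbs, Int.abs_eq_natAbs]
  exact_mod_cast this

theorem encard_edgesWithTop_le {a b c : ℤ} (ha : 0 < a) (hb : 0 < b) (hc : c < 0)
    (e : Sym2 ℤ) : (edgesWithTop sumOrder (solutionTriangles a b c) e).encard ≤ 5 := by
  induction e using Sym2.ind with | _ p q => ?_
  have key : ∀ T ∈ edgesWithTop sumOrder (solutionTriangles a b c) s(p, q),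
      p ≠ q ∧ T ∈ triangle p q '' boxedCompletions a b c p q := by
    rintro T ⟨⟨x, y, z, hxy, hxz, hyz, h, rfl⟩, he, htop⟩
    obtain ⟨hpq, w, hwp, hwq, hsolves, hT⟩ := exists_completion_of_mem_triangle hxy hxz hyz h he
    rw [hT] at htop ⊢
    refine ⟨hpq, w, ⟨hsolves, ?_, ?_⟩, rfl⟩
    · exact abs_add_le_of_sumOrder (htop _ (by simp [triangle]) (mt Sym2.congr_right.mp hwq))
    · refine abs_add_le_of_sumOrder (htop _ (by simp [triangle]) ?_)
      rw [Sym2.eq_swap (a := p)]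
      exact mt Sym2.congr_right.mp hwp
  rcases (edgesWithTop sumOrder (solutionTriangles a b c) s(p, q)).eq_empty_or_nonempty
    with h | ⟨T, hT⟩
  · simp [h]
  calc _ ≤ (triangle p q '' boxedCompletions a b c p q).encard :=
        Set.encard_le_encard fun T hT => (key T hT).2
    _ ≤ (boxedCompletions a b c p q).encard := Set.encard_image_le _ _
    _ ≤ 5 := encard_boxedCompletions_le ha hb hc (key T hT).1

theorem exists_isProperColoring_of_pos_pos_neg {a b c : ℤ} (ha : 0 < a) (hb : 0 < b)
    (hc : c < 0) : ∃ χ : Sym2 ℤ → Fin 6, IsProperColoring (solutionTriangles a b c) χ :=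
  exists_isProperColoring_of_isWellOrder sumOrder _
    (fun _ => finite_nontrivial_of_mem_solutionTriangles)
    fun e => (encard_edgesWithTop_le ha hb hc e).trans_lt (by simp; decide)

theorem exists_isProperColoring_of_pos {a b c : ℤ} (ha : 0 < a) (hb : 0 < b) (hc : 0 < c) :
    ∃ χ : Sym2 ℤ → Fin 6, IsProperColoring (solutionTriangles a b c) χ := by
  refine ⟨Sym2.lift ⟨fun u v => if (u < 0 ↔ v < 0) then 0 else 1,
    fun u v => by simp only [Iff.comm]⟩, ?_⟩
  rintro _ ⟨x, y, z, hxy, -, -, h, rfl⟩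
  rw [← Set.not_subsingleton_iff]
  intro hmono
  have h₁ := hmono (Set.mem_image_of_mem _ (by simp [triangle] : s(x, y) ∈ _))
    (Set.mem_image_of_mem _ (by simp [triangle] : s(x, z) ∈ _))
  have h₂ := hmono (Set.mem_image_of_mem _ (by simp [triangle] : s(x, y) ∈ _))
    (Set.mem_image_of_mem _ (by simp [triangle] : s(y, z) ∈ _))
  simp only [Sym2.lift_mk] at h₁ h₂
  -- three integers cannot have pairwise different signs
  have hsign : (x < 0 ↔ y < 0) ∧ (x < 0 ↔ z < 0) := by
    split_ifs at h₁ h₂ <;> simp_all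
    tauto
  rcases lt_or_ge x 0 with hx | hx
  · nlinarith [hsign.1.mp hx, hsign.2.mp hx]
  · have hy := le_of_not_gt (mt hsign.1.mpr hx.not_gt)
    have hz := le_of_not_gt (mt hsign.2.mpr hx.not_gt)
    have : x = 0 := by nlinarith
    have : y = 0 := by nlinarith
    omega

theorem exists_isProperColoring_of_mul_pos {a b c : ℤ} (hab : 0 < a * b) (hc : c ≠ 0) :
    ∃ χ : Sym2 ℤ → Fin 6, IsProperColoring (solutionTriangles a b c) χ := by
  wlog ha : 0 < a generalizing a b c
  · rw [← solutionTriangles_neg]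
    exact this (by linarith) (neg_ne_zero.mpr hc)
      (neg_pos.mpr ((not_lt.mp ha).lt_of_ne (left_ne_zero_of_mul hab.ne')))
  have hb : 0 < b := pos_of_mul_pos_right hab ha.le
  rcases hc.lt_or_gt with hc | hc
  · exact exists_isProperColoring_of_pos_pos_neg ha hb hc
  · exact exists_isProperColoring_of_pos ha hb hc

theorem exists_isProperColoring {a b c : ℤ} (ha : a ≠ 0) (hb : b ≠ 0) (hc : c ≠ 0) :
    ∃ χ : Sym2 ℤ → Fin 6, IsProperColoring (solutionTriangles a b c) χ := by
  have : 0 < a * b ∨ 0 < a * c ∨ 0 < b * c := by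
    rcases ha.lt_or_gt with ha | ha <;> rcases hb.lt_or_gt with hb | hb <;>
      rcases hc.lt_or_gt with hc | hc <;> simp [mul_pos_of_neg_of_neg, *]
  rcases this with h | h | h
  · exact exists_isProperColoring_of_mul_pos h hc
  · rw [← solutionTriangles_swap_right]
    exact exists_isProperColoring_of_mul_pos h hb
  · rw [← solutionTriangles_swap_left, ← solutionTriangles_swap_right]
    exact exists_isProperColoring_of_mul_pos h ha

end LinearEquationColoring

/-- For nonzero integers `a, b, c` there is a 6-coloring of the 2-element subsets of `ℤ`
such that for every solution of `a·x + b·y + c·z = 0` by pairwise distinct integers, the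
three pairs `{x,y}, {x,z}, {y,z}` do not all receive the same color. -/
theorem no_monochromatic_triple_six_colors (a b c : ℤ) (ha : a ≠ 0) (hb : b ≠ 0)
    (hc : c ≠ 0) :
    ∃ χ : Sym2 ℤ → Fin 6,
      ∀ x y z : ℤ, x ≠ y → x ≠ z → y ≠ z → a * x + b * y + c * z = 0 →
        ¬ (χ s(x, y) = χ s(x, z) ∧ χ s(x, y) = χ s(y, z)) := by
  obtain ⟨χ, hχ⟩ := LinearEquationColoring.exists_isProperColoring ha hb hc
  refine ⟨χ, fun x y z hxy hxz hyz h ⟨h₁, h₂⟩ => ?_⟩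
  obtain ⟨_, ⟨f, hf, rfl⟩, _, ⟨g, hg, rfl⟩, hfg⟩ := hχ _ ⟨x, y, z, hxy, hxz, hyz, h, rfl⟩
  simp only [LinearEquationColoring.triangle, Set.mem_insert_iff, Set.mem_singleton_iff] at hf hg
  rcases hf with rfl | rfl | rfl <;> rcases hg with rfl | rfl | rfl <;> simp_all
end

section
/- Let a and b be positive integers with a ≠ b. There exists a 2-edge-coloring χ of the complete graph on the positive integers such that for all positive integers w > x and y > z with a·(w − x) = b·(y − z), the pairs {w, x} and {y, z} receive different colors under χ. -/
/-!
Choose a prime `p` at which `a` and `b` have different valuations `s ≠ t`, and colour a pair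
by the parity of `⌊v_p(difference) / |s - t|⌋`. If `a (w - x) = b (y - z)`, the valuations of
the two differences differ by exactly `|s - t|`, so the two quotients differ by one.
-/

theorem exists_prime_padicValNat_ne {a b : ℕ} (ha : a ≠ 0) (hb : b ≠ 0) (hab : a ≠ b) :
    ∃ p, p.Prime ∧ padicValNat p a ≠ padicValNat p b := by
  by_contra! h
  exact hab ((Nat.eq_iff_prime_padicValNat_eq a b ha hb).2 h)

theorem padicValNat_add_eq_of_mul_eq {p a b c d : ℕ} [Fact p.Prime] (ha : a ≠ 0) (hb : b ≠ 0)
    (hc : c ≠ 0) (hd : d ≠ 0) (h : a * c = b * d) :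
    padicValNat p a + padicValNat p c = padicValNat p b + padicValNat p d := by
  rw [← padicValNat.mul ha hc, ← padicValNat.mul hb hd, h]

theorem Nat.add_div_mod_two_ne {e : ℕ} (he : 0 < e) (n : ℕ) : (n + e) / e % 2 ≠ n / e % 2 := by
  rw [Nat.add_div_right n he]
  omega

theorem Nat.div_dist_mod_two_ne_of_add_eq {s t m n : ℕ} (hst : s ≠ t) (h : s + m = t + n) :
    m / s.dist t % 2 ≠ n / s.dist t % 2 := by
  rcases Nat.lt_or_gt_of_ne hst with hlt | hgt
  · obtain rfl : m = n + (t - s) := by omega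
    rw [Nat.dist_eq_sub_of_le hlt.le]
    exact Nat.add_div_mod_two_ne (by omega) n
  · obtain rfl : n = m + (s - t) := by omega
    rw [Nat.dist_eq_sub_of_le_right hgt.le]
    exact (Nat.add_div_mod_two_ne (by omega) m).symm

def valuationBlockParity (p e : ℕ) : Sym2 ℕ → Fin 2 :=
  Sym2.lift ⟨fun u v => ⟨padicValNat p (u.dist v) / e % 2, Nat.mod_lt _ two_pos⟩,
    fun u v => by simp only [Nat.dist_comm]⟩

theorem valuationBlockParity_of_lt (p e : ℕ) {u v : ℕ} (h : v < u) :
    (valuationBlockParity p e s(u, v) : ℕ) = padicValNat p (u - v) / e % 2 := by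
  simp only [valuationBlockParity, Sym2.lift_mk, Nat.dist_eq_sub_of_le_right h.le]

/-- For positive integers `a ≠ b` there is a 2-edge-coloring of the complete graph on the
positive integers such that whenever `w > x ≥ 1`, `y > z ≥ 1` and `a·(w − x) = b·(y − z)`,
the pairs `{w, x}` and `{y, z}` receive different colors. -/
theorem no_monochromatic_scaled_differences (a b : ℕ) (ha : 0 < a) (hb : 0 < b)
    (hab : a ≠ b) :
    ∃ χ : Sym2 ℕ → Fin 2,
      ∀ w x y z : ℕ, 0 < x → x < w → 0 < z → z < y →
        a * (w - x) = b * (y - z) → χ s(w, x) ≠ χ s(y, z) := by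
  obtain ⟨p, hp, hv⟩ := exists_prime_padicValNat_ne ha.ne' hb.ne' hab
  have := Fact.mk hp
  refine ⟨valuationBlockParity p ((padicValNat p a).dist (padicValNat p b)), ?_⟩
  intro w x y z _ hxw _ hzy h
  have hval := padicValNat_add_eq_of_mul_eq (p := p) ha.ne' hb.ne' (by omega) (by omega) h
  intro hcol
  apply Nat.div_dist_mod_two_ne_of_add_eq hv hval
  rw [← valuationBlockParity_of_lt p _ hxw, ← valuationBlockParity_of_lt p _ hzy, hcol]
end

section
/- For all positive integers r and k, there exists a number GW = GW(r,k) such that for every r-coloring of the grid [GW] × [GW] there exist positive integers x, y, and d ≥ 1 such that all the points (x + i·d, y + j·d) for 0 ≤ i, j ≤ k−1 lie in [GW] × [GW] and receive the same color. -/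
open Combinatorics Finset

/-- **Gallai–Witt theorem** (two-dimensional form). For all `r, k ≥ 1` there is a
`GW = GW(r,k)` so that any `r`-coloring of `[GW] × [GW]` gives positive `x, y` and `d ≥ 1`
such that all the points `(x + i·d, y + j·d)` for `0 ≤ i, j ≤ k−1` lie in `[GW] × [GW]` and
receive the same color. -/
theorem gallai_witt (r k : ℕ) (hr : 0 < r) (hk : 0 < k) :
    ∃ GW : ℕ, ∀ χ : ℕ × ℕ → Fin r,
      ∃ x y d : ℕ, 0 < x ∧ 0 < y ∧ 1 ≤ d ∧
        (∀ i j : ℕ, i < k → j < k → x + i * d ≤ GW ∧ y + j * d ≤ GW) ∧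
        ∃ c : Fin r, ∀ i j : ℕ, i < k → j < k → χ (x + i * d, y + j * d) = c := by
  classical
  set S : Finset (ℕ × ℕ) := Finset.range k ×ˢ Finset.range k with hS
  obtain ⟨ι, _inst, hι⟩ := Combinatorics.Line.exists_mono_in_high_dimension S (Fin r)
  refine ⟨2 * Fintype.card ι * k + 1, fun χ => ?_⟩
  obtain ⟨l, c, hl⟩ := hι fun v => χ ((∑ t, ((v t : ℕ × ℕ))) + (1, 1))
  set s : Finset ι := Finset.univ.filter (fun t => l.idxFun t = none) with hs
  have ha : 0 < s.card := Finset.card_pos.mpr ⟨l.proper.choose, by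
    rw [hs, Finset.mem_filter]; exact ⟨Finset.mem_univ _, l.proper.choose_spec⟩⟩
  set b : ℕ × ℕ := ∑ t ∈ sᶜ, ((l.idxFun t).map (Subtype.val : {x // x ∈ S} → ℕ × ℕ)).getD 0 with hb
  -- bound on the terms of b
  have hterm : ∀ t : ι, (((l.idxFun t).map (Subtype.val : {x // x ∈ S} → ℕ × ℕ)).getD 0).1 ≤ k ∧
      (((l.idxFun t).map (Subtype.val : {x // x ∈ S} → ℕ × ℕ)).getD 0).2 ≤ k := by
    intro t
    cases h : l.idxFun t with
    | none => simp
    | some m =>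
      have hm : (m : ℕ × ℕ) ∈ Finset.range k ×ˢ Finset.range k := m.2
      rw [Finset.mem_product, Finset.mem_range, Finset.mem_range] at hm
      simp [h]
      omega
  have hb1 : b.1 ≤ Fintype.card ι * k := by
    rw [hb, Prod.fst_sum]
    calc ∑ t ∈ sᶜ, (((l.idxFun t).map (Subtype.val : {x // x ∈ S} → ℕ × ℕ)).getD 0).1
        ≤ ∑ t ∈ sᶜ, k := Finset.sum_le_sum fun t _ => (hterm t).1
      _ = sᶜ.card * k := by rw [Finset.sum_const, smul_eq_mul]
      _ ≤ Fintype.card ι * k := Nat.mul_le_mul_right _ (Finset.card_le_univ _)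
  have hb2 : b.2 ≤ Fintype.card ι * k := by
    rw [hb, Prod.snd_sum]
    calc ∑ t ∈ sᶜ, (((l.idxFun t).map (Subtype.val : {x // x ∈ S} → ℕ × ℕ)).getD 0).2
        ≤ ∑ t ∈ sᶜ, k := Finset.sum_le_sum fun t _ => (hterm t).2
      _ = sᶜ.card * k := by rw [Finset.sum_const, smul_eq_mul]
      _ ≤ Fintype.card ι * k := Nat.mul_le_mul_right _ (Finset.card_le_univ _)
  have hsc : s.card ≤ Fintype.card ι := Finset.card_le_univ _
  refine ⟨b.1 + 1, b.2 + 1, s.card, Nat.succ_pos _, Nat.succ_pos _, ha, ?_, c, ?_⟩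
  · intro i j hi hj
    have h1 : i * s.card ≤ k * Fintype.card ι := Nat.mul_le_mul (le_of_lt hi) hsc
    have h2 : j * s.card ≤ k * Fintype.card ι := Nat.mul_le_mul (le_of_lt hj) hsc
    constructor <;> nlinarith
  · intro i j hi hj
    have hp : ((i, j) : ℕ × ℕ) ∈ S := by
      exact Finset.mem_product.mpr ⟨Finset.mem_range.mpr hi, Finset.mem_range.mpr hj⟩
    have key : (∑ t, ((l ⟨(i, j), hp⟩ t : ℕ × ℕ))) = s.card • ((i, j) : ℕ × ℕ) + b := by
      rw [← Finset.sum_add_sum_compl s]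
      congr 1
      · rw [← Finset.sum_const]
        apply Finset.sum_congr rfl
        intro t ht
        rw [hs, Finset.mem_filter] at ht
        rw [l.apply_none _ _ ht.right]
      · apply Finset.sum_congr rfl
        intro t ht
        rw [hs, Finset.compl_filter, Finset.mem_filter] at ht
        obtain ⟨m, hm⟩ := Option.ne_none_iff_exists.mp ht.right
        simp [Line.coe_apply, ← hm]
    have := hl ⟨(i, j), hp⟩
    simp only [key] at this
    rw [← this]
    congr 1
    simp [Prod.ext_iff]
    constructor <;> ring
end
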